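/- arXiv:1804.06641 — 9 statements merged into one kernel-verified Lean document; each statement's English description precedes it below -/
import Mathlib

section
/- If G is a graph with a Kempe coloring 𝔠 (a partition of V(G) into anticliques such that the union of any two color classes induces a connected subgraph), S ⊆ V(G) is a separating set, and F ∈ 𝔠 satisfies F ∩ S = ∅, then F contains a vertex from every component of G − S. -/
/-- `𝔠` is a Kempe coloring of `G`: a partition of the vertex set into independent
sets (anticliques) such that the union of any two color classes induces a connected
subgraph. -/
def KempeColoring {V : Type*} (G : SimpleGraph V) (𝔠 : Set (Set V)) : Prop :=
  (∀ C ∈ 𝔠, C.Nonempty) ∧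
  (⋃₀ 𝔠 = Set.univ) ∧
  (∀ C ∈ 𝔠, ∀ D ∈ 𝔠, C ≠ D → Disjoint C D) ∧
  (∀ C ∈ 𝔠, ∀ a ∈ C, ∀ b ∈ C, ¬ G.Adj a b) ∧
  (∀ C ∈ 𝔠, ∀ D ∈ 𝔠, C ≠ D → (G.induce (C ∪ D)).Connected)

/-- If `G` has a Kempe coloring `𝔠`, `S` is a separating set (i.e. `G - S` is
disconnected), and `F ∈ 𝔠` is disjoint from `S`, then `F` contains a vertex from
every component of `G - S`. -/
theorem kempe_class_meets_every_component {V : Type*} [Fintype V] (G : SimpleGraph V)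
    (𝔠 : Set (Set V)) (hK : KempeColoring G 𝔠)
    (S : Set V) (hsep : ¬ (G.induce Sᶜ).Preconnected)
    (F : Set V) (hF : F ∈ 𝔠) (hFS : F ∩ S = ∅) :
    ∀ v : ↥(Sᶜ), ∃ w : ↥(Sᶜ), (w : V) ∈ F ∧ (G.induce Sᶜ).Reachable v w := by
  obtain ⟨hne, hcov, hdisj, hind, hconn⟩ := hK
  intro v
  -- find the color class of v
  have hv : (v : V) ∈ ⋃₀ 𝔠 := by rw [hcov]; trivial
  obtain ⟨C, hC, hvC⟩ := hv
  by_cases hvF : (v : V) ∈ F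
  · exact ⟨v, hvF, SimpleGraph.Reachable.refl v⟩
  · have hCF : C ≠ F := fun h => hvF (h ▸ hvC)
    have hcon := hconn C hC F hF hCF
    -- pick an element of F
    obtain ⟨f, hf⟩ := hne F hF
    have hvCF : (v : V) ∈ C ∪ F := Or.inl hvC
    have hfCF : f ∈ C ∪ F := Or.inr hf
    obtain ⟨p⟩ := hcon.preconnected ⟨v, hvCF⟩ ⟨f, hfCF⟩
    have hne' : (⟨(v : V), hvCF⟩ : ↥(C ∪ F)) ≠ ⟨f, hfCF⟩ := by
      intro h
      exact hvF (by simpa using congrArg Subtype.val h ▸ hf)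
    cases p with
    | nil => exact absurd rfl hne'
    | cons h q =>
      rename_i x
      -- h : (G.induce (C ∪ F)).Adj ⟨v, _⟩ x, i.e. G.Adj ↑v ↑x
      have hadj : G.Adj (v : V) (x : V) := h
      have hxF : (x : V) ∈ F := by
        rcases x.2 with hxC | hxF
        · exact absurd hadj (hind C hC _ hvC _ hxC)
        · exact hxF
      have hxS : (x : V) ∈ Sᶜ := by
        intro hxS
        exact absurd (Set.mem_inter hxF hxS) (by rw [hFS]; exact id)
      refine ⟨⟨x, hxS⟩, hxF, SimpleGraph.Adj.reachable ?_⟩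
      exact hadj
end

section
/- If G is a graph with a Kempe coloring 𝔠 of order k and S ⊆ V(G) is a separating set, then S contains vertices from at least k − 1 of the color classes of 𝔠. -/
/-- If `G` has a Kempe coloring of order `k` and `S` is a separating set, then `S`
meets at least `k - 1` of the color classes. -/
theorem separator_meets_classes {V : Type*} [Fintype V] (G : SimpleGraph V)
    (𝔠 : Set (Set V)) (hK : KempeColoring G 𝔠) (k : ℕ) (hk : 𝔠.ncard = k)
    (S : Set V) (hsep : ¬ (G.induce Sᶜ).Preconnected) :
    k - 1 ≤ {C ∈ 𝔠 | (C ∩ S).Nonempty}.ncard := by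
  classical
  by_contra hlt
  push_neg at hlt
  obtain ⟨hne, hcov, hdisj, hind, hconn⟩ := hK
  have hfin : 𝔠.Finite := Set.toFinite _
  set T := {C ∈ 𝔠 | (C ∩ S).Nonempty} with hT
  have hTsub : T ⊆ 𝔠 := fun C hC => hC.1
  have hUcard : (𝔠 \ T).ncard = k - T.ncard := by
    rw [Set.ncard_diff hTsub, hk]
  have hTle : T.ncard ≤ k := by rw [← hk]; exact Set.ncard_le_ncard hTsub hfin
  have h2 : 1 < (𝔠 \ T).ncard := by omega
  obtain ⟨C, D, hC, hD, hCD⟩ := (Set.one_lt_ncard_iff).mp h2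
  have hC𝔠 : C ∈ 𝔠 := hC.1
  have hD𝔠 : D ∈ 𝔠 := hD.1
  have hCS : C ∩ S = ∅ := by
    by_contra h
    exact hC.2 ⟨hC𝔠, Set.nonempty_iff_ne_empty.mpr h⟩
  have hDS : D ∩ S = ∅ := by
    by_contra h
    exact hD.2 ⟨hD𝔠, Set.nonempty_iff_ne_empty.mpr h⟩
  have hCsub : C ⊆ Sᶜ := fun x hx hxS => by
    have : x ∈ C ∩ S := ⟨hx, hxS⟩
    rw [hCS] at this; exact this
  have hDsub : D ⊆ Sᶜ := fun x hx hxS => by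
    have : x ∈ D ∩ S := ⟨hx, hxS⟩
    rw [hDS] at this; exact this
  -- C is internally connected inside Sᶜ, via C ∪ D
  have hCDsub : C ∪ D ⊆ Sᶜ := Set.union_subset hCsub hDsub
  let f : G.induce (C ∪ D) →g G.induce Sᶜ :=
    ⟨fun v => ⟨v.1, hCDsub v.2⟩, fun {a b} h => h⟩
  have hCconn : ∀ c1 c2 (h1 : c1 ∈ C) (h2 : c2 ∈ C),
      (G.induce Sᶜ).Reachable ⟨c1, hCsub h1⟩ ⟨c2, hCsub h2⟩ := by
    intro c1 c2 h1 h2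
    have := (hconn C hC𝔠 D hD𝔠 hCD).preconnected ⟨c1, Or.inl h1⟩ ⟨c2, Or.inl h2⟩
    exact this.map f
  -- every vertex outside S reaches C inside Sᶜ
  have key : ∀ x (hx : x ∈ Sᶜ), ∃ c, ∃ hc : c ∈ C,
      (G.induce Sᶜ).Reachable ⟨x, hx⟩ ⟨c, hCsub hc⟩ := by
    intro x hx
    obtain ⟨A, hA𝔠, hxA⟩ : ∃ A ∈ 𝔠, x ∈ A := by
      have : x ∈ ⋃₀ 𝔠 := by rw [hcov]; trivial
      exact this
    by_cases hxC : x ∈ C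
    · exact ⟨x, hxC, SimpleGraph.Reachable.refl _⟩
    · have hAC : A ≠ C := fun h => hxC (h ▸ hxA)
      obtain ⟨c0, hc0⟩ := hne C hC𝔠
      have hreach := (hconn A hA𝔠 C hC𝔠 hAC).preconnected
        ⟨x, Or.inl hxA⟩ ⟨c0, Or.inr hc0⟩
      obtain ⟨w⟩ := hreach
      have hxne : (⟨x, Or.inl hxA⟩ : ↑(A ∪ C)) ≠ ⟨c0, Or.inr hc0⟩ := by
        intro h
        exact hxC (by
          have : x = c0 := congrArg Subtype.val h
          rw [this]; exact hc0)
      have hnn : ¬ w.Nil := SimpleGraph.Walk.not_nil_of_ne hxne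
      have hadj := w.adj_snd hnn
      have hGadj : G.Adj x (w.getVert 1).1 := hadj
      have hsndC : (w.getVert 1).1 ∈ C := by
        rcases (w.getVert 1).2 with h | h
        · exact absurd hGadj (hind A hA𝔠 x hxA _ h)
        · exact h
      have hsndS : (w.getVert 1).1 ∈ Sᶜ := hCsub hsndC
      refine ⟨(w.getVert 1).1, hsndC, SimpleGraph.Adj.reachable ?_⟩
      exact hGadj
  apply hsep
  intro a b
  obtain ⟨ca, hca, hra⟩ := key a.1 a.2
  obtain ⟨cb, hcb, hrb⟩ := key b.1 b.2
  have h1 : (G.induce Sᶜ).Reachable a ⟨ca, hCsub hca⟩ := by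
    convert hra
  have h2 : (G.induce Sᶜ).Reachable b ⟨cb, hCsub hcb⟩ := by
    convert hrb
  exact h1.trans ((hCconn ca cb hca hcb).trans h2.symm)
end

section
/- Every graph admitting a Kempe coloring with k color classes is (k−1)-connected. -/
/-- `G` is `n`-connected: it has more than `n` vertices and deleting any set of
fewer than `n` vertices leaves a connected graph. -/
def KConnected {V : Type*} [Fintype V] (G : SimpleGraph V) (n : ℕ) : Prop :=
  n < Fintype.card V ∧
  ∀ S : Finset V, S.card < n → (G.induce ((S : Set V)ᶜ)).Connected

theorem Set.ncard_sep_not_disjoint_le {α : Type*} {𝔠 : Set (Set α)} (h𝔠 : 𝔠.PairwiseDisjoint id)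
    {S : Set α} (hS : S.Finite) : {C ∈ 𝔠 | ¬Disjoint C S}.ncard ≤ S.ncard := by
  have hmeet : ∀ C : {C ∈ 𝔠 | ¬Disjoint C S}, (C.1 ∩ S).Nonempty := fun C =>
    Set.not_disjoint_iff_nonempty_inter.mp C.2.2
  let pick : {C ∈ 𝔠 | ¬Disjoint C S} → S := fun C => ⟨(hmeet C).some, (hmeet C).some_mem.2⟩
  have hpick : Function.Injective pick := by
    intro C D hCD
    by_contra hne
    have hC := (hmeet C).some_mem.1
    have hD := (hmeet D).some_mem.1
    rw [show (hmeet C).some = (hmeet D).some from congrArg Subtype.val hCD] at hC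
    exact Set.disjoint_left.mp (h𝔠 C.2.1 D.2.1 (Subtype.coe_ne_coe.mpr hne)) hC hD
  have := hS.to_subtype
  exact Nat.card_le_card_of_injective pick hpick

namespace SimpleGraph

variable {V : Type*} {G : SimpleGraph V}

theorem exists_adj_of_connected_induce_union {A B : Set V} (hAB : (G.induce (A ∪ B)).Connected)
    (hA : ∀ a ∈ A, ∀ b ∈ A, ¬G.Adj a b) (hB : B.Nonempty) {v : V} (hvA : v ∈ A) (hvB : v ∉ B) :
    ∃ w ∈ B, G.Adj v w := by
  obtain ⟨b, hb⟩ := hB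
  have : Nontrivial ↥(A ∪ B) :=
    ⟨⟨v, Or.inl hvA⟩, ⟨b, Or.inr hb⟩, fun h => hvB (Subtype.mk.inj h ▸ hb)⟩
  obtain ⟨⟨w, hw⟩, hvw⟩ := hAB.preconnected.exists_adj_of_nontrivial ⟨v, Or.inl hvA⟩
  rcases hw with hwA | hwB
  · exact absurd hvw (hA v hvA w hwA)
  · exact ⟨w, hwB, hvw⟩

theorem connected_induce_of_forall_exists_adj {W U : Set V} (hW : (G.induce W).Connected)
    (hWU : W ⊆ U) (hU : ∀ v ∈ U, v ∉ W → ∃ w ∈ W, G.Adj v w) : (G.induce U).Connected := by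
  obtain ⟨⟨u, hu⟩⟩ := hW.nonempty
  refine G.induce_connected_of_patches u (hWU hu) fun {v} hv => ?_
  by_cases hvW : v ∈ W
  · exact ⟨W, hWU, hu, hvW, hW.preconnected _ _⟩
  obtain ⟨w, hw, hvw⟩ := hU v hv hvW
  have hconn : (G.induce (W ∪ {w, v})).Connected :=
    induce_union_connected hW.preconnected (induce_pair_connected_of_adj hvw.symm).preconnected
      ⟨w, hw, Set.mem_insert w {v}⟩
  exact ⟨W ∪ {w, v}, Set.union_subset hWU (Set.insert_subset (hWU hw) (Set.singleton_subset_iff.mpr hv)),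
    Or.inl hu, Or.inr (Set.mem_insert_of_mem w rfl), hconn.preconnected _ _⟩

end SimpleGraph

namespace KempeColoring

variable {V : Type*} {G : SimpleGraph V} {𝔠 : Set (Set V)}

theorem ncard_le_card [Finite V] (hK : KempeColoring G 𝔠) : 𝔠.ncard ≤ Nat.card V := by
  have hsep : {C ∈ 𝔠 | ¬Disjoint C Set.univ} = 𝔠 :=
    Set.sep_eq_self_iff_mem_true.mpr fun C hC => by
      simpa [Set.disjoint_univ] using (hK.1 C hC).ne_empty
  have := Set.ncard_sep_not_disjoint_le hK.2.2.1 (Set.toFinite Set.univ)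
  rwa [hsep, Set.ncard_univ] at this

theorem exists_two_classes_disjoint [Finite V] (hK : KempeColoring G 𝔠) (S : Finset V)
    (hS : S.card + 2 ≤ 𝔠.ncard) :
    ∃ C ∈ 𝔠, ∃ D ∈ 𝔠, C ≠ D ∧ Disjoint C S ∧ Disjoint D S := by
  set T := {C ∈ 𝔠 | ¬Disjoint C S}
  have hT : T.ncard ≤ S.card := by
    simpa using Set.ncard_sep_not_disjoint_le hK.2.2.1 S.finite_toSet
  have hsplit := Set.ncard_le_ncard_sdiff_add_ncard 𝔠 T
  obtain ⟨C, D, hC, hD, hCD⟩ := (Set.one_lt_ncard_iff (s := 𝔠 \ T)).mp (by omega)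
  have hdisj : ∀ C ∈ 𝔠 \ T, Disjoint C S := fun C hC => not_not.mp fun h => hC.2 ⟨hC.1, h⟩
  exact ⟨C, hC.1, D, hD.1, hCD, hdisj C hC, hdisj D hD⟩

theorem exists_adj_of_notMem (hK : KempeColoring G 𝔠) {C : Set V} (hC : C ∈ 𝔠) {v : V}
    (hv : v ∉ C) : ∃ w ∈ C, G.Adj v w := by
  obtain ⟨A, hA, hvA⟩ := Set.sUnion_eq_univ_iff.mp hK.2.1 v
  have hAC : A ≠ C := by rintro rfl; exact hv hvA
  exact SimpleGraph.exists_adj_of_connected_induce_union (hK.2.2.2.2 A hA C hC hAC)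
    (hK.2.2.2.1 A hA) (hK.1 C hC) hvA hv

end KempeColoring

/-- Every graph admitting a Kempe coloring with `k` color classes is
`(k-1)`-connected. -/
theorem kempe_implies_connectivity {V : Type*} [Fintype V] [Nonempty V]
    (G : SimpleGraph V) (𝔠 : Set (Set V)) (hK : KempeColoring G 𝔠)
    (k : ℕ) (hk : 𝔠.ncard = k) :
    KConnected G (k - 1) := by
  subst hk
  refine ⟨?_, fun S hS => ?_⟩
  · have hle := hK.ncard_le_card
    rw [Nat.card_eq_fintype_card] at hle
    have := Fintype.card_pos (α := V)
    omega
  obtain ⟨C, hC, D, hD, hCD, hCS, hDS⟩ := hK.exists_two_classes_disjoint S (by omega)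
  refine SimpleGraph.connected_induce_of_forall_exists_adj (hK.2.2.2.2 C hC D hD hCD)
    (Set.union_subset (Set.subset_compl_iff_disjoint_right.mpr hCS)
      (Set.subset_compl_iff_disjoint_right.mpr hDS)) fun v _ hv => ?_
  obtain ⟨w, hw, hvw⟩ := hK.exists_adj_of_notMem hC fun hvC => hv (Or.inl hvC)
  exact ⟨w, Or.inl hw, hvw⟩
end

section
/- Let H be a graph such that its line graph L(H) is k-connected. Then for all distinct vertices a, b of H of degree at least k, there exist k pairwise edge-disjoint a,b-paths in H. -/
/-- The line graph of a simple graph `G`: vertices are the edges of `G`, two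
distinct edges are adjacent iff they share an endpoint. -/
def lineGraph {V : Type*} (G : SimpleGraph V) : SimpleGraph G.edgeSet :=
  SimpleGraph.fromRel (fun e f => ∃ v : V, v ∈ (e : Sym2 V) ∧ v ∈ (f : Sym2 V))

/-!
Deleting fewer than `k` edges of `H` deletes fewer than `k` vertices of `L(H)`, so `L(H)` stays
connected; as `a` and `b` each keep an incident edge, they stay joined in `H`. Hence `a` and `b`
are `k`-edge-reachable and the edge form of Menger's theorem applies. We prove it by
Ford–Fulkerson with unit capacities: a flow of value `< k` has an augmenting path, since otherwise
the saturated edges leaving the residual reach of `a` would form an edge cut of size `< k`; a flow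
of value `k` then splits into `k` paths along saturated edges, and subtracting one such path
leaves no flow on its edges, which makes the paths edge-disjoint.
-/

open Function

lemma Fin.pairwise_cons {α : Type*} {r : α → α → Prop} (hr : ∀ x y, r x y → r y x)
    {n : ℕ} {x : α} {f : Fin n → α} (hx : ∀ i, r x (f i)) (hf : Pairwise (r on f)) :
    Pairwise (r on (Fin.cons x f : Fin (n + 1) → α)) := by
  intro i j hij
  cases i using Fin.cases <;> cases j using Fin.cases
  · exact absurd rfl hij
  · exact hx _
  · exact hr _ _ (hx _)
  · exact hf fun h => hij (congrArg Fin.succ h)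

namespace SimpleGraph

variable {V : Type*}

section LineGraph

variable {H : SimpleGraph V} {s : Set (Sym2 V)}

lemma reachable_deleteEdges_of_mem_edge {e : Sym2 V} (he : e ∈ H.edgeSet) (hes : e ∉ s)
    {x y : V} (hx : x ∈ e) (hy : y ∈ e) : (H.deleteEdges s).Reachable x y := by
  induction e using Sym2.ind with
  | _ u v =>
    have hadj : (H.deleteEdges s).Adj u v := (deleteEdges_adj ..).mpr ⟨he, hes⟩
    rcases Sym2.mem_iff.mp hx with rfl | rfl <;> rcases Sym2.mem_iff.mp hy with rfl | rfl
    exacts [.refl _, hadj.reachable, hadj.symm.reachable, .refl _]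

lemma reachable_deleteEdges_of_reachable_induce_lineGraph {T : Set H.edgeSet}
    (hT : ∀ e ∈ T, (e : Sym2 V) ∉ s) {ε φ : T}
    (h : ((_root_.lineGraph H).induce T).Reachable ε φ)
    {x y : V} (hx : x ∈ ((ε : H.edgeSet) : Sym2 V)) (hy : y ∈ ((φ : H.edgeSet) : Sym2 V)) :
    (H.deleteEdges s).Reachable x y := by
  obtain ⟨w⟩ := h
  induction w generalizing x with
  | nil => exact reachable_deleteEdges_of_mem_edge (Subtype.prop _) (hT _ (Subtype.prop _)) hx hy
  | @cons ε ψ φ hadj _ ih =>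
    have hadj' : (_root_.lineGraph H).Adj ε ψ := hadj
    obtain ⟨z, hzε, hzψ⟩ :
        ∃ z, z ∈ ((ε : H.edgeSet) : Sym2 V) ∧ z ∈ ((ψ : H.edgeSet) : Sym2 V) := by
      rcases (fromRel_adj ..).mp hadj' with ⟨-, ⟨z, hε, hψ⟩ | ⟨z, hψ, hε⟩⟩ <;> exact ⟨z, hε, hψ⟩
    exact (reachable_deleteEdges_of_mem_edge (Subtype.prop _) (hT _ ε.2) hx hzε).trans
      (ih hzψ hy)

variable [Fintype V] [DecidableRel H.Adj]

lemma exists_mem_incidenceSet_notMem {a : V} (h : s.encard < H.degree a) :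
    ∃ e ∈ H.incidenceSet a, e ∉ s := by
  classical
  by_contra! hsub
  have hle := Set.encard_le_encard (s := (H.incidenceFinset a : Set (Sym2 V))) (t := s)
    (by rwa [coe_incidenceFinset])
  rw [Set.encard_coe_eq_coe_finsetCard, card_incidenceFinset_eq_degree] at hle
  exact (h.trans_le hle).false

lemma isEdgeReachable_of_kConnected_lineGraph [Fintype H.edgeSet] {k : ℕ}
    (hconn : KConnected (_root_.lineGraph H) k) {a b : V} (ha : k ≤ H.degree a)
    (hb : k ≤ H.degree b) : H.IsEdgeReachable k a b := by
  classical
  intro s hs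
  set S : Finset H.edgeSet := Finset.univ.filter fun e => (e : Sym2 V) ∈ s
  have hS : S.card < k := by
    have hle := Set.encard_le_encard (t := s)
      (s := (S.map (Embedding.subtype _) : Set (Sym2 V))) (by simp +contextual [Set.subset_def, S])
    rw [Set.encard_coe_eq_coe_finsetCard, Finset.card_map] at hle
    exact_mod_cast hle.trans_lt hs
  have hT : ∀ e ∈ ((S : Set H.edgeSet)ᶜ), (e : Sym2 V) ∉ s := by simp [S]
  obtain ⟨ea, hea, heas⟩ := exists_mem_incidenceSet_notMem (hs.trans_le (by exact_mod_cast ha))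
  obtain ⟨eb, heb, hebs⟩ := exists_mem_incidenceSet_notMem (hs.trans_le (by exact_mod_cast hb))
  have hconn' := (hconn.2 S hS).preconnected
    ⟨⟨ea, hea.1⟩, by simpa [S] using heas⟩ ⟨⟨eb, heb.1⟩, by simpa [S] using hebs⟩
  exact reachable_deleteEdges_of_reachable_induce_lineGraph hT hconn' hea.2 heb.2

end LineGraph

section Flow

variable {G : SimpleGraph V}

lemma exists_walk_of_reflTransGen {r : V → V → Prop} (hr : ∀ x y, r x y → G.Adj x y) {u v : V}
    (h : Relation.ReflTransGen r u v) : ∃ p : G.Walk u v, ∀ d ∈ p.darts, r d.fst d.snd := by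
  induction h using Relation.ReflTransGen.head_induction_on with
  | refl => exact ⟨.nil, by simp⟩
  | head hxy _ ih =>
    obtain ⟨p, hp⟩ := ih
    exact ⟨.cons (hr _ _ hxy) p, by simpa [hxy] using hp⟩

lemma exists_isPath_or_exists_closed_finset [Fintype V] [DecidableEq V] (r : V → V → Prop)
    (hr : ∀ x y, r x y → G.Adj x y) (a b : V) :
    (∃ p : G.Walk a b, p.IsPath ∧ ∀ d ∈ p.darts, r d.fst d.snd) ∨
      ∃ R : Finset V, a ∈ R ∧ b ∉ R ∧ ∀ x ∈ R, ∀ y ∉ R, ¬r x y := by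
  classical
  by_cases h : Relation.ReflTransGen r a b
  · obtain ⟨p, hp⟩ := exists_walk_of_reflTransGen hr h
    exact .inl ⟨p.bypass, p.bypass_isPath, fun d hd => hp d (p.darts_bypass_subset_darts hd)⟩
  · refine .inr ⟨Finset.univ.filter (Relation.ReflTransGen r a),
      by simp [Relation.ReflTransGen.refl], by simpa, ?_⟩
    intro x hx y hy hxy
    simp only [Finset.mem_filter, Finset.mem_univ, true_and] at hx hy
    exact hy (hx.tail hxy)

namespace Walk

variable {u v : V}

lemma edges_eq_map_toProd (p : G.Walk u v) :
    p.edges = (p.darts.map Dart.toProd).map fun q => s(q.1, q.2) := by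
  rw [List.map_map]
  rfl

lemma IsTrail.nodup_map_toProd {p : G.Walk u v} (hp : p.IsTrail) :
    (p.darts.map Dart.toProd).Nodup :=
  (p.edges_eq_map_toProd ▸ hp.edges_nodup).of_map _

variable [DecidableEq V]

def flow (p : G.Walk u v) (x y : V) : ℤ :=
  (p.darts.map Dart.toProd).count (x, y) - (p.darts.map Dart.toProd).count (y, x)

lemma flow_swap (p : G.Walk u v) (x y : V) : p.flow y x = -p.flow x y := by
  simp [flow]

lemma flow_reverse (p : G.Walk u v) (x y : V) : p.reverse.flow x y = p.flow y x := by
  have h (q : V × V) : ((p.reverse.darts.map Dart.toProd).count q) =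
      (p.darts.map Dart.toProd).count q.swap := by
    rw [darts_reverse, List.map_reverse, List.count_reverse, List.map_map,
      show Dart.toProd ∘ Dart.symm = Prod.swap ∘ (Dart.toProd : G.Dart → V × V) from rfl,
      ← List.map_map, ← Prod.swap_swap q, List.count_map_of_injective _ _ Prod.swap_injective,
      Prod.swap_swap]
  simp only [flow, h, Prod.swap_prod_mk]

lemma count_map_toProd_eq_zero {p : G.Walk u v} {x y : V} (h : s(x, y) ∉ p.edges) :
    (p.darts.map Dart.toProd).count (x, y) = 0 := by
  refine List.count_eq_zero.mpr fun hxy => h ?_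
  obtain ⟨⟨⟨x', y'⟩, hadj⟩, hd, hdxy⟩ := List.mem_map.mp hxy
  obtain ⟨rfl, rfl⟩ := Prod.mk.inj hdxy
  exact List.mem_map_of_mem hd

lemma flow_eq_zero_of_notMem_edges {p : G.Walk u v} {x y : V} (h : s(x, y) ∉ p.edges) :
    p.flow x y = 0 := by
  rw [flow, count_map_toProd_eq_zero h, count_map_toProd_eq_zero (Sym2.eq_swap ▸ h)]
  rfl

lemma adj_of_flow_ne_zero {p : G.Walk u v} {x y : V} (h : p.flow x y ≠ 0) : G.Adj x y := by
  by_contra hxy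
  exact h (flow_eq_zero_of_notMem_edges fun he => hxy (p.adj_of_mem_edges he))

lemma flow_nonpos {p : G.Walk u v} {x y : V} (h : (x, y) ∉ p.darts.map Dart.toProd) :
    p.flow x y ≤ 0 := by
  simp [flow, List.count_eq_zero.mpr h]

lemma sum_flow [Fintype V] (p : G.Walk u v) (x : V) :
    ∑ y, p.flow x y = (if x = u then 1 else 0) - (if x = v then 1 else 0) := by
  induction p with
  | nil => simp [flow]
  | @cons u w v h p ih =>
    have hstep : ∀ y, (cons h p).flow x y =
        ((if (u, w) = (x, y) then 1 else 0) - (if (u, w) = (y, x) then 1 else 0)) +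
          p.flow x y := by
      intro y
      simp only [flow, darts_cons, List.map_cons, List.count_cons, beq_iff_eq]
      push_cast
      ring
    simp only [hstep, Finset.sum_add_distrib, Finset.sum_sub_distrib, ih, Prod.mk.injEq]
    simp only [ite_and, Finset.sum_ite_irrel, Finset.sum_ite_eq, Finset.mem_univ, if_true,
      Finset.sum_const_zero]
    split_ifs <;> grind

lemma IsTrail.flow_le_one {p : G.Walk u v} (hp : p.IsTrail) (x y : V) : p.flow x y ≤ 1 := by
  have := List.nodup_iff_count_le_one.mp hp.nodup_map_toProd (x, y)
  simp only [flow]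
  omega

lemma IsTrail.flow_eq_one {p : G.Walk u v} (hp : p.IsTrail) {d : G.Dart} (hd : d ∈ p.darts) :
    p.flow d.fst d.snd = 1 := by
  have hnd := hp.nodup_map_toProd
  have hmem : (d.fst, d.snd) ∈ p.darts.map Dart.toProd := List.mem_map_of_mem hd
  have hswap : (d.snd, d.fst) ∉ p.darts.map Dart.toProd := by
    intro h
    have := List.inj_on_of_nodup_map (p.edges_eq_map_toProd ▸ hp.edges_nodup) hmem h
      Sym2.eq_swap
    exact d.fst_ne_snd (Prod.mk.inj this).1
  rw [flow, List.count_eq_one_of_mem hnd hmem, List.count_eq_zero.mpr hswap]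
  rfl

end Walk

variable [Fintype V]

/-- Integral flows from `a` to `b` in `G` with unit capacity on every edge, as skew-symmetric
functions on ordered pairs. Their value is `∑ y, f a y`. -/
structure IsUnitFlow (G : SimpleGraph V) (a b : V) (f : V → V → ℤ) : Prop where
  skew : ∀ x y, f y x = -f x y
  le_one : ∀ x y, f x y ≤ 1
  adj_of_ne_zero : ∀ x y, f x y ≠ 0 → G.Adj x y
  sum_eq_zero : ∀ x, x ≠ a → x ≠ b → ∑ y, f x y = 0

namespace IsUnitFlow

variable {a b : V} {f : V → V → ℤ}

lemma zero : IsUnitFlow G a b 0 :=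
  ⟨by simp, by simp, by simp, by simp⟩

lemma symm (hf : IsUnitFlow G a b f) : IsUnitFlow G b a f :=
  ⟨hf.skew, hf.le_one, hf.adj_of_ne_zero, fun x hb ha => hf.sum_eq_zero x ha hb⟩

variable [DecidableEq V]

lemma add_flow (hf : IsUnitFlow G a b f) {p : G.Walk a b} (hp : p.IsTrail)
    (hres : ∀ d ∈ p.darts, f d.fst d.snd ≤ 0) : IsUnitFlow G a b (f + p.flow) where
  skew x y := by simp only [Pi.add_apply, hf.skew x y, p.flow_swap x y]; ring
  le_one x y := by
    simp only [Pi.add_apply]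
    by_cases hxy : (x, y) ∈ p.darts.map Dart.toProd
    · obtain ⟨d, hd, hdxy⟩ := List.mem_map.mp hxy
      obtain ⟨rfl, rfl⟩ := Prod.ext_iff.mp hdxy.symm
      linarith [hres d hd, hp.flow_le_one d.fst d.snd]
    · linarith [hf.le_one x y, p.flow_nonpos hxy]
  adj_of_ne_zero x y h := by
    by_cases hfxy : f x y = 0
    · exact p.adj_of_flow_ne_zero (by simpa [hfxy] using h)
    · exact hf.adj_of_ne_zero x y hfxy
  sum_eq_zero x ha hb := by
    simp [Finset.sum_add_distrib, p.sum_flow, hf.sum_eq_zero x ha hb, ha, hb]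

lemma sub_flow (hf : IsUnitFlow G a b f) {p : G.Walk a b} (hp : p.IsTrail)
    (hsat : ∀ d ∈ p.darts, f d.fst d.snd = 1) : IsUnitFlow G a b (f - p.flow) := by
  have hrev : f - p.flow = f + p.reverse.flow := by
    ext x y
    simp [sub_eq_add_neg, p.flow_reverse, p.flow_swap x y]
  rw [hrev]
  refine (hf.symm.add_flow hp.reverse fun d hd => ?_).symm
  rw [Walk.darts_reverse, List.mem_reverse, List.mem_map] at hd
  obtain ⟨d, hd, rfl⟩ := hd
  simp [Dart.symm, hf.skew d.fst d.snd, hsat d hd]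

lemma sum_eq_sum_product_compl (hf : IsUnitFlow G a b f) {R : Finset V} (ha : a ∈ R)
    (hb : b ∉ R) : ∑ y, f a y = ∑ q ∈ R ×ˢ Rᶜ, f q.1 q.2 := by
  have hinner : ∑ x ∈ R, ∑ y ∈ R, f x y = 0 := by
    have hswap : ∑ x ∈ R, ∑ y ∈ R, f x y = -∑ x ∈ R, ∑ y ∈ R, f x y :=
      calc _ = ∑ y ∈ R, ∑ x ∈ R, f x y := Finset.sum_comm
        _ = ∑ y ∈ R, ∑ x ∈ R, -f y x :=
          Finset.sum_congr rfl fun y _ => Finset.sum_congr rfl fun x _ => hf.skew y x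
        _ = _ := by simp only [Finset.sum_neg_distrib]
    linarith
  calc ∑ y, f a y = ∑ x ∈ R, ∑ y, f x y := by
        refine (Finset.sum_eq_single_of_mem (f := fun x => ∑ y, f x y) a ha
          fun x hx hxa => ?_).symm
        exact hf.sum_eq_zero x hxa (ne_of_mem_of_not_mem hx hb)
    _ = ∑ x ∈ R, ∑ y ∈ R, f x y + ∑ x ∈ R, ∑ y ∈ Rᶜ, f x y := by
        simp only [← Finset.sum_add_distrib, Finset.sum_add_sum_compl]
    _ = ∑ q ∈ R ×ˢ Rᶜ, f q.1 q.2 := by rw [hinner, zero_add, Finset.sum_product]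

lemma sub_flow_eq_zero_of_mem_edges (hf : IsUnitFlow G a b f) {p : G.Walk a b}
    (hp : p.IsTrail) (hsat : ∀ d ∈ p.darts, f d.fst d.snd = 1) {x y : V} (he : s(x, y) ∈ p.edges) :
    (f - p.flow) x y = 0 := by
  obtain ⟨d, hd, hde⟩ := List.mem_map.mp he
  have hflow := hp.flow_eq_one hd
  have hfd := hsat d hd
  rcases Sym2.eq_iff.mp hde with ⟨rfl, rfl⟩ | ⟨rfl, rfl⟩
  · simp [hflow, hfd]
  · simp [hf.skew d.fst d.snd, p.flow_swap d.fst d.snd, hflow, hfd]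

lemma exists_value_succ (hf : IsUnitFlow G a b f) (hab : a ≠ b) {k : ℕ}
    (hreach : G.IsEdgeReachable k a b) (hlt : ∑ y, f a y < k) :
    ∃ g, IsUnitFlow G a b g ∧ ∑ y, g a y = ∑ y, f a y + 1 := by
  rcases exists_isPath_or_exists_closed_finset (fun x y => G.Adj x y ∧ f x y ≤ 0)
    (fun _ _ h => h.1) a b with ⟨p, hp, hres⟩ | ⟨R, ha, hb, hR⟩
  · refine ⟨f + p.flow, hf.add_flow hp.isTrail fun d hd => (hres d hd).2, ?_⟩
    simp [Finset.sum_add_distrib, p.sum_flow, hab]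
  · exfalso
    classical
    set C := (R ×ˢ Rᶜ).filter fun q => G.Adj q.1 q.2
    -- every edge leaving `R` is saturated, so the flow value is the size of the cut
    have hval : ∑ y, f a y = C.card := by
      rw [hf.sum_eq_sum_product_compl ha hb, Finset.card_filter]
      push_cast
      refine Finset.sum_congr rfl fun q hq => ?_
      obtain ⟨hx, hy⟩ := Finset.mem_product.mp hq
      split_ifs with hadj
      · have := hR q.1 hx q.2 (Finset.mem_compl.mp hy)
        have := hf.le_one q.1 q.2
        grind
      · by_contra hne
        exact hadj (hf.adj_of_ne_zero _ _ hne)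
    have hcard : ((C.image fun q => s(q.1, q.2) : Finset _) : Set (Sym2 V)).encard < k := by
      rw [Set.encard_coe_eq_coe_finsetCard]
      exact_mod_cast Finset.card_image_le.trans_lt (by omega)
    obtain ⟨w⟩ := hreach hcard
    obtain ⟨d, -, hx, hy⟩ := w.exists_boundary_dart R ha hb
    refine ((deleteEdges_adj ..).mp d.adj).2 (Finset.mem_image.mpr ⟨d.toProd, ?_, rfl⟩)
    exact Finset.mem_filter.mpr ⟨Finset.mem_product.mpr ⟨hx, Finset.mem_compl.mpr hy⟩,
      ((deleteEdges_adj ..).mp d.adj).1⟩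

lemma exists_edgeDisjoint_paths (hf : IsUnitFlow G a b f) (hab : a ≠ b) {k : ℕ}
    (hval : ∑ y, f a y = k) :
    ∃ P : Fin k → G.Walk a b, (∀ i, (P i).IsPath) ∧
      (∀ i, ∀ d ∈ (P i).darts, f d.fst d.snd = 1) ∧
      Pairwise (List.Disjoint on fun i => (P i).edges) := by
  induction k generalizing f with
  | zero => exact ⟨Fin.elim0, fun i => i.elim0, fun i => i.elim0, fun i => i.elim0⟩
  | succ k ih =>
    rcases exists_isPath_or_exists_closed_finset (fun x y => f x y = 1)
      (fun x y h => hf.adj_of_ne_zero x y (by simp [h])) a b with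
      ⟨p, hp, hsat⟩ | ⟨R, ha, hb, hR⟩
    swap
    · have : ∑ y, f a y ≤ 0 := by
        rw [hf.sum_eq_sum_product_compl ha hb]
        refine Finset.sum_nonpos fun q hq => ?_
        obtain ⟨hx, hy⟩ := Finset.mem_product.mp hq
        have := hR q.1 hx q.2 (Finset.mem_compl.mp hy)
        have := hf.le_one q.1 q.2
        omega
      omega
    obtain ⟨P, hP, hPsat, hPdisj⟩ :=
      ih (hf.sub_flow hp.isTrail hsat) (by simp [Finset.sum_sub_distrib, p.sum_flow, hab, hval])
    -- the remaining flow vanishes on the edges of `p`, so the paths it carries avoid them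
    have hPsat' : ∀ i, ∀ d ∈ (P i).darts, d.edge ∉ p.edges ∧ f d.fst d.snd = 1 := by
      intro i d hd
      have hd1 := hPsat i d hd
      have hnot : d.edge ∉ p.edges := fun he => by
        simp [hf.sub_flow_eq_zero_of_mem_edges hp.isTrail hsat he] at hd1
      refine ⟨hnot, ?_⟩
      simpa [Walk.flow_eq_zero_of_notMem_edges hnot] using hd1
    refine ⟨Fin.cons p P, Fin.cases hp hP, Fin.cases hsat fun i d hd => (hPsat' i d hd).2, ?_⟩
    refine Fin.pairwise_cons (r := List.Disjoint on fun q : G.Walk a b => q.edges)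
      (fun _ _ h => h.symm) (fun i e he he' => ?_) hPdisj
    obtain ⟨d, hd, rfl⟩ := List.mem_map.mp he'
    exact (hPsat' i d hd).1 he

end IsUnitFlow

variable [DecidableEq V]

lemma IsEdgeReachable.exists_isUnitFlow {a b : V} {k : ℕ} (h : G.IsEdgeReachable k a b)
    (hab : a ≠ b) : ∃ f, IsUnitFlow G a b f ∧ ∑ y, f a y = k := by
  suffices ∀ m ≤ k, ∃ f, IsUnitFlow G a b f ∧ ∑ y, f a y = m from this k le_rfl
  intro m hm
  induction m with
  | zero => exact ⟨0, .zero, by simp⟩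
  | succ m ih =>
    obtain ⟨f, hf, hval⟩ := ih (by omega)
    obtain ⟨g, hg, hgval⟩ := hf.exists_value_succ hab h (by omega)
    exact ⟨g, hg, by push_cast; omega⟩

theorem IsEdgeReachable.exists_edgeDisjoint_paths {a b : V} {k : ℕ}
    (h : G.IsEdgeReachable k a b) (hab : a ≠ b) :
    ∃ P : Fin k → G.Walk a b, (∀ i, (P i).IsPath) ∧
      Pairwise (List.Disjoint on fun i => (P i).edges) := by
  obtain ⟨f, hf, hval⟩ := h.exists_isUnitFlow hab
  obtain ⟨P, hP, -, hdisj⟩ := hf.exists_edgeDisjoint_paths hab hval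
  exact ⟨P, hP, hdisj⟩

end Flow

end SimpleGraph

theorem edge_disjoint_paths_of_lineGraph_connected_general {V : Type*} [Fintype V]
    (H : SimpleGraph V) [DecidableRel H.Adj] [Fintype H.edgeSet]
    (k : ℕ) (hconn : KConnected (lineGraph H) k)
    (a b : V) (hab : a ≠ b) (ha : k ≤ H.degree a) (hb : k ≤ H.degree b) :
    ∃ P : Fin k → H.Walk a b, (∀ i, (P i).IsPath) ∧
      ∀ i j, i ≠ j → ∀ e, e ∈ (P i).edges → e ∉ (P j).edges := by
  classical
  obtain ⟨P, hP, hdisj⟩ :=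
    (H.isEdgeReachable_of_kConnected_lineGraph hconn ha hb).exists_edgeDisjoint_paths hab
  exact ⟨P, hP, fun i j hij _ => @hdisj i j hij _⟩

/-- If the line graph of `H` is `k`-connected, then any two distinct vertices of
`H` of degree at least `k` are joined by `k` pairwise edge-disjoint paths. -/
theorem edge_disjoint_paths_of_lineGraph_connected {V : Type*} [Fintype V]
    [DecidableEq V] (H : SimpleGraph V) [DecidableRel H.Adj] [Fintype H.edgeSet]
    (k : ℕ) (hconn : KConnected (lineGraph H) k)
    (a b : V) (hab : a ≠ b) (ha : k ≤ H.degree a) (hb : k ≤ H.degree b) :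
    ∃ P : Fin k → H.Walk a b, (∀ i, (P i).IsPath) ∧
      ∀ i j, i ≠ j → ∀ e, e ∈ (P i).edges → e ∉ (P j).edges :=
  edge_disjoint_paths_of_lineGraph_connected_general H k hconn a b hab ha hb
end

section
/- For every set T of n edges of the simple complete graph K_n on n ≥ 3 vertices, there exists a family of n connected, pairwise disjoint, pairwise incident edge sets, each containing exactly one edge of T. -/
/-- An edge set `F` is connected if it is nonempty and any two of its edges are
linked by a chain of edges of `F`, consecutive ones sharing an endpoint. -/
def EdgesConnected {V : Type*} (F : Set (Sym2 V)) : Prop :=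
  F.Nonempty ∧ ∀ e ∈ F, ∀ f ∈ F,
    Relation.ReflTransGen (fun a b => a ∈ F ∧ b ∈ F ∧ ∃ v : V, v ∈ a ∧ v ∈ b) e f

/-- Two edge sets are incident if some edge of one shares an endpoint with some
edge of the other. -/
def EdgesIncident {V : Type*} (F F' : Set (Sym2 V)) : Prop :=
  ∃ e ∈ F, ∃ f ∈ F', ∃ v : V, v ∈ e ∧ v ∈ f

/-- The family `𝔎` of pairwise disjoint sets is traversed by `T`: each member of
`𝔎` contains exactly one element of `T`, and each element of `T` lies in a member. -/
def TraversedBy {α : Type*} (𝔎 : Set (Set α)) (T : Set α) : Prop :=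
  (∀ A ∈ 𝔎, ∃! e, e ∈ T ∧ e ∈ A) ∧ ∀ e ∈ T, ∃ A ∈ 𝔎, e ∈ A

/-!
View `T` as a graph on the `n` vertices. Its tree components have one edge fewer than vertices,
so, as `|T| = n`, the other components have edges to spare. Fixing a vertex `hub` outside the
trees, Hall's theorem yields a bijection `v ↦ edge v` from the vertices onto `T` with
`v ∈ edge v`, except that a vertex of a tree may be *displaced* onto an edge of a non-tree
component avoiding `hub`. The member of the family through `edge v` consists of `edge v` and
some edges outside `T`, among them the spoke `s(hub, v)` and, for displaced `v`, a connector
from `v` to `edge v`. The spokes make all members meet at `hub`, except the member of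
`edge mate`, where `edge hub = s(hub, mate)`; that one collects the edges at `mate` and reaches
every other member through them.
-/

lemma EdgesIncident.symm {V : Type*} {F F' : Set (Sym2 V)} (h : EdgesIncident F F') :
    EdgesIncident F' F := by
  obtain ⟨e, he, f, hf, v, hve, hvf⟩ := h
  exact ⟨f, hf, e, he, v, hvf, hve⟩

lemma EdgesConnected.of_forall_reflTransGen {V : Type*} {F : Set (Sym2 V)} {q : Sym2 V}
    (hq : q ∈ F)
    (h : ∀ e ∈ F,
      Relation.ReflTransGen (fun a b => a ∈ F ∧ b ∈ F ∧ ∃ v : V, v ∈ a ∧ v ∈ b) q e) :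
    EdgesConnected F := by
  have : Std.Symm (fun a b => a ∈ F ∧ b ∈ F ∧ ∃ v : V, v ∈ a ∧ v ∈ b) :=
    ⟨fun _ _ ⟨ha, hb, v, hva, hvb⟩ => ⟨hb, ha, v, hvb, hva⟩⟩
  exact ⟨⟨q, hq⟩, fun e he f hf => (Std.Symm.symm _ _ (h e he)).trans (h f hf)⟩

open Finset Function
open scoped Classical

namespace CompleteGraphTraversal

noncomputable section

variable {α : Type*}

variable (T : Finset (Sym2 α))

def meeting (A : Finset α) : Finset (Sym2 α) := T.filter fun e => ∃ x ∈ e, x ∈ A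

def within (B : Finset α) : Finset (Sym2 α) := T.filter fun e => ∀ x ∈ e, x ∈ B

abbrev graph : SimpleGraph α := SimpleGraph.fromEdgeSet (T : Set (Sym2 α))

variable {T}

lemma mem_meeting {A : Finset α} {e : Sym2 α} : e ∈ meeting T A ↔ e ∈ T ∧ ∃ x ∈ e, x ∈ A :=
  mem_filter

lemma mem_within {B : Finset α} {e : Sym2 α} : e ∈ within T B ↔ e ∈ T ∧ ∀ x ∈ e, x ∈ B :=
  mem_filter

lemma meeting_mono {A B : Finset α} (h : A ⊆ B) : meeting T A ⊆ meeting T B := fun _ he =>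
  mem_meeting.2 ⟨(mem_meeting.1 he).1, (mem_meeting.1 he).2.imp fun _ hx => ⟨hx.1, h hx.2⟩⟩

lemma within_subset_meeting {B C : Finset α} (h : B ⊆ C) : within T B ⊆ meeting T C := by
  intro e he
  obtain ⟨x, hx⟩ : ∃ x, x ∈ e := ⟨_, e.out_fst_mem⟩
  exact mem_meeting.2 ⟨(mem_within.1 he).1, x, hx, h ((mem_within.1 he).2 x hx)⟩

@[simp]
lemma within_empty : within T ∅ = ∅ :=
  eq_empty_of_forall_notMem fun e he => by simpa using (mem_within.1 he).2 _ e.out_fst_mem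

lemma reachable_of_mem {e : Sym2 α} (he : e ∈ T) {a b : α} (ha : a ∈ e) (hb : b ∈ e) :
    (graph T).Reachable a b := by
  induction e with
  | _ x y =>
    by_cases hab : a = b
    · exact hab ▸ .rfl
    refine SimpleGraph.Adj.reachable ((SimpleGraph.fromEdgeSet_adj _).2 ⟨?_, hab⟩)
    rcases Sym2.mem_iff.1 ha with rfl | rfl <;> rcases Sym2.mem_iff.1 hb with rfl | rfl <;>
      simp_all [Sym2.eq_swap]

lemma exists_boundary_edge {A : Finset α} {a z : α} (ha : a ∈ A) (hz : z ∉ A)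
    (h : (graph T).Reachable a z) : ∃ w ∈ A, ∃ x ∉ A, s(w, x) ∈ T := by
  obtain ⟨p⟩ := h
  obtain ⟨d, -, hd₁, hd₂⟩ := p.exists_boundary_dart (A : Set α) ha hz
  exact ⟨_, hd₁, _, hd₂, ((SimpleGraph.fromEdgeSet_adj _).1 d.adj).1⟩

variable [Fintype α]

variable (T) in
def component (v : α) : Finset α := univ.filter ((graph T).Reachable v)

variable (T) in
/-- Holds exactly when the component of `v` is a tree. -/
def Deficient (v : α) : Prop := #(meeting T (component T v)) < #(component T v)

lemma mem_component {v w : α} : w ∈ component T v ↔ (graph T).Reachable v w := by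
  simp [component]

lemma component_eq_of_reachable {v w : α} (h : (graph T).Reachable v w) :
    component T v = component T w := by
  ext x
  simp only [mem_component]
  exact ⟨h.symm.trans, h.trans⟩

lemma deficient_iff_of_mem {e : Sym2 α} (he : e ∈ T) {a b : α} (ha : a ∈ e) (hb : b ∈ e) :
    Deficient T a ↔ Deficient T b := by
  rw [Deficient, Deficient, component_eq_of_reachable (reachable_of_mem he ha hb)]

lemma mem_component_of_mem_meeting {v : α} {A : Finset α} (hA : A ⊆ component T v)
    {e : Sym2 α} (he : e ∈ meeting T A) {x : α} (hx : x ∈ e) : x ∈ component T v := by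
  obtain ⟨heT, y, hy, hyA⟩ := mem_meeting.1 he
  exact mem_component.2 ((mem_component.1 (hA hyA)).trans (reachable_of_mem heT hy hx))

lemma disjoint_meeting {v : α} {A B : Finset α} (hA : A ⊆ component T v)
    (hB : Disjoint B (component T v)) : Disjoint (meeting T A) (meeting T B) := by
  refine disjoint_left.2 fun e heA heB => ?_
  obtain ⟨-, y, hy, hyB⟩ := mem_meeting.1 heB
  exact disjoint_left.1 hB hyB (mem_component_of_mem_meeting hA heA hy)

/-- Peel off a vertex with an edge leaving the subset. -/
lemma card_le_card_meeting_of_ssubset_component {v z : α} (hz : z ∈ component T v)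
    (A : Finset α) (hA : A ⊆ component T v) (hzA : z ∉ A) : #A ≤ #(meeting T A) := by
  induction A using Finset.strongInduction with
  | _ A ih =>
  obtain rfl | ⟨a, ha⟩ := A.eq_empty_or_nonempty
  · simp
  have haz : (graph T).Reachable a z :=
    (mem_component.1 (hA ha)).symm.trans (mem_component.1 hz)
  obtain ⟨w, hw, x, hx, hwx⟩ := exists_boundary_edge ha hzA haz
  have hle := ih (A.erase w) (erase_ssubset hw) ((erase_subset w A).trans hA)
    (fun h => hzA (mem_of_mem_erase h))
  have hnew : s(w, x) ∉ meeting T (A.erase w) := by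
    rintro h
    obtain ⟨-, y, hy, hyA⟩ := mem_meeting.1 h
    rcases Sym2.mem_iff.1 hy with rfl | rfl
    · exact notMem_erase y A hyA
    · exact hx (mem_of_mem_erase hyA)
  have hsub : insert s(w, x) (meeting T (A.erase w)) ⊆ meeting T A :=
    insert_subset (mem_meeting.2 ⟨hwx, w, by simp, hw⟩) (meeting_mono (erase_subset w A))
  calc #A = #(A.erase w) + 1 := (card_erase_add_one hw).symm
    _ ≤ #(meeting T (A.erase w)) + 1 := by omega
    _ = #(insert s(w, x) (meeting T (A.erase w))) := (card_insert_of_notMem hnew).symm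
    _ ≤ #(meeting T A) := card_le_card hsub

lemma card_le_card_meeting (A : Finset α) (hA : ∀ x ∈ A, ¬ Deficient T x) :
    #A ≤ #(meeting T A) := by
  induction A using Finset.strongInduction with
  | _ A ih =>
  obtain rfl | ⟨a, ha⟩ := A.eq_empty_or_nonempty
  · simp
  set C := component T a
  have haC : a ∈ C := mem_component.2 .rfl
  have hrest := ih (A \ C) ((ssubset_iff_of_subset sdiff_subset).2 ⟨a, ha, by simp [haC]⟩)
    fun x hx => hA x (mem_sdiff.1 hx).1
  have hcomp : #(A ∩ C) ≤ #(meeting T (A ∩ C)) := by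
    by_cases hCA : C ⊆ A
    · rw [inter_eq_right.2 hCA]
      exact not_lt.1 (hA a ha)
    obtain ⟨z, hzC, hzA⟩ := not_subset.1 hCA
    exact card_le_card_meeting_of_ssubset_component hzC _ inter_subset_right
      fun h => hzA (mem_inter.1 h).1
  have hdisj : Disjoint (meeting T (A ∩ C)) (meeting T (A \ C)) :=
    disjoint_meeting inter_subset_right disjoint_sdiff_self_left
  calc #A = #(A ∩ C) + #(A \ C) := (card_inter_add_card_sdiff A C).symm
    _ ≤ #(meeting T (A ∩ C)) + #(meeting T (A \ C)) := by omega
    _ = #(meeting T (A ∩ C) ∪ meeting T (A \ C)) := (card_union_of_disjoint hdisj).symm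
    _ ≤ #(meeting T A) :=
      card_le_card (union_subset (meeting_mono inter_subset_left) (meeting_mono sdiff_subset))

lemma within_subset_union_component (B : Finset α) (v : α) :
    within T B ⊆ within T (B ∩ component T v) ∪ within T (B \ component T v) := by
  intro e he
  obtain ⟨heT, heB⟩ := mem_within.1 he
  by_cases hC : ∃ x ∈ e, x ∈ component T v
  · obtain ⟨x, hx, hxC⟩ := hC
    refine mem_union_left _ (mem_within.2 ⟨heT, fun y hy => mem_inter.2 ⟨heB y hy, ?_⟩⟩)
    exact mem_component.2 ((mem_component.1 hxC).trans (reachable_of_mem heT hx hy))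
  · simp only [not_exists, not_and] at hC
    exact mem_union_right _ (mem_within.2 ⟨heT, fun y hy => mem_sdiff.2 ⟨heB y hy, hC y hy⟩⟩)

/-- Inside one tree component, the part of the tree outside `B` meets at least as many edges
as it has vertices, and those edges are not within `B`. -/
lemma card_within_lt (B : Finset α) (hB : ∀ x ∈ B, Deficient T x) (hne : B.Nonempty) :
    #(within T B) < #B := by
  induction B using Finset.strongInduction with
  | _ B ih =>
  obtain ⟨b, hb⟩ := hne
  set C := component T b
  have hbC : b ∈ C := mem_component.2 .rfl
  have hcomp : #(within T (B ∩ C)) < #(B ∩ C) := by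
    have hout : #(C \ B) ≤ #(meeting T (C \ B)) :=
      card_le_card_meeting_of_ssubset_component hbC _ sdiff_subset (by simp [hb])
    have hdisj : Disjoint (within T (B ∩ C)) (meeting T (C \ B)) := by
      refine disjoint_left.2 fun e he he' => ?_
      obtain ⟨-, y, hy, hyC⟩ := mem_meeting.1 he'
      exact (mem_sdiff.1 hyC).2 (mem_inter.1 ((mem_within.1 he).2 y hy)).1
    have hsub : within T (B ∩ C) ∪ meeting T (C \ B) ⊆ meeting T C :=
      union_subset (within_subset_meeting inter_subset_right) (meeting_mono sdiff_subset)
    have hdef : #(meeting T C) < #C := hB b hb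
    have hsplit : #(B ∩ C) + #(C \ B) = #C := by
      rw [inter_comm, card_inter_add_card_sdiff]
    have := card_le_card hsub
    rw [card_union_of_disjoint hdisj] at this
    omega
  have hrest : #(within T (B \ C)) ≤ #(B \ C) := by
    obtain hemp | hne := (B \ C).eq_empty_or_nonempty
    · simp [hemp]
    exact (ih _ ((ssubset_iff_of_subset sdiff_subset).2 ⟨b, hb, by simp [hbC]⟩)
      (fun x hx => hB x (mem_sdiff.1 hx).1) hne).le
  calc #(within T B) ≤ #(within T (B ∩ C) ∪ within T (B \ C)) :=
        card_le_card (within_subset_union_component B b)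
    _ ≤ #(within T (B ∩ C)) + #(within T (B \ C)) := card_union_le _ _
    _ < #(B ∩ C) + #(B \ C) := by omega
    _ = #B := card_inter_add_card_sdiff B C

lemma card_within_le (B : Finset α) (hB : ∀ x ∈ B, Deficient T x) : #(within T B) ≤ #B := by
  obtain rfl | hne := B.eq_empty_or_nonempty
  · simp
  exact (card_within_lt B hB hne).le

lemma exists_not_deficient [Nonempty α] (hT : #T = Fintype.card α) : ∃ w, ¬ Deficient T w := by
  by_contra! h
  have hall : within T univ = T := by ext; simp [mem_within]
  have := card_within_lt univ (fun x _ => h x) univ_nonempty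
  rw [hall, card_univ] at this
  omega

variable (T) in
def farEdges (w : α) : Finset (Sym2 α) := T.filter fun e => w ∉ e ∧ ∀ x ∈ e, ¬ Deficient T x

variable (T) in
def candidates (w v : α) : Finset (Sym2 α) :=
  if Deficient T v then meeting T {v} ∪ farEdges T w else meeting T {v}

lemma meeting_subset_biUnion_candidates (w : α) (A : Finset α) :
    meeting T A ⊆ A.biUnion (candidates T w) := by
  intro e he
  obtain ⟨heT, x, hxe, hxA⟩ := mem_meeting.1 he
  have hx : e ∈ meeting T {x} := mem_meeting.2 ⟨heT, x, hxe, mem_singleton_self x⟩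
  refine mem_biUnion.2 ⟨x, hxA, ?_⟩
  unfold candidates
  split_ifs
  exacts [mem_union_left _ hx, hx]

lemma meeting_singleton_sdiff_subset {w : α} (hw : ¬ Deficient T w) (A : Finset α) :
    meeting T {w} \ meeting T A ⊆ (Aᶜ.filter fun x => ¬ Deficient T x).image (s(w, ·)) := by
  intro e he
  obtain ⟨hwe, hA⟩ := mem_sdiff.1 he
  obtain ⟨heT, _, hw', h⟩ := mem_meeting.1 hwe
  obtain rfl := mem_singleton.1 h
  set x := Sym2.Mem.other hw'
  have hxe : x ∈ e := Sym2.other_mem hw'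
  refine mem_image.2 ⟨x, mem_filter.2 ⟨mem_compl.2 fun hxA => hA ?_, ?_⟩, Sym2.other_spec hw'⟩
  · exact mem_meeting.2 ⟨heT, x, hxe, hxA⟩
  · exact (deficient_iff_of_mem heT hxe hw').not.2 hw

/-- The edges of `T` that are neither far nor meeting `A` lie in tree components outside `A`,
or join `w` to non-tree vertices outside `A`; either way there are at most `#Aᶜ` of them. -/
lemma card_sdiff_farEdges_sdiff_meeting_le {w : α} (hw : ¬ Deficient T w) (A : Finset α) :
    #((T \ farEdges T w) \ meeting T A) ≤ #Aᶜ := by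
  have hsub : (T \ farEdges T w) \ meeting T A ⊆
      within T (Aᶜ.filter (Deficient T)) ∪ (meeting T {w} \ meeting T A) := by
    intro e he
    obtain ⟨heTf, hA⟩ := mem_sdiff.1 he
    obtain ⟨heT, hfar⟩ := mem_sdiff.1 heTf
    have hout : ∀ x ∈ e, x ∉ A := fun x hx hxA => hA (mem_meeting.2 ⟨heT, x, hx, hxA⟩)
    by_cases hwe : w ∈ e
    · exact mem_union_right _
        (mem_sdiff.2 ⟨mem_meeting.2 ⟨heT, w, hwe, mem_singleton_self w⟩, hA⟩)
    obtain ⟨x, hxe, hx⟩ : ∃ x ∈ e, Deficient T x := by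
      by_contra! h
      exact hfar (mem_filter.2 ⟨heT, hwe, h⟩)
    refine mem_union_left _ (mem_within.2 ⟨heT, fun y hy => ?_⟩)
    exact mem_filter.2 ⟨mem_compl.2 (hout y hy), (deficient_iff_of_mem heT hxe hy).1 hx⟩
  calc #((T \ farEdges T w) \ meeting T A)
      ≤ #(within T (Aᶜ.filter (Deficient T))) + #(meeting T {w} \ meeting T A) :=
        (card_le_card hsub).trans (card_union_le _ _)
    _ ≤ #(Aᶜ.filter (Deficient T)) + #(Aᶜ.filter fun x => ¬ Deficient T x) := by
        gcongr
        · exact card_within_le _ fun x hx => (mem_filter.1 hx).2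
        · exact (card_le_card (meeting_singleton_sdiff_subset hw A)).trans card_image_le
    _ = #Aᶜ := card_filter_add_card_filter_not _

lemma card_le_card_biUnion_candidates (hT : #T = Fintype.card α) {w : α}
    (hw : ¬ Deficient T w) (A : Finset α) : #A ≤ #(A.biUnion (candidates T w)) := by
  by_cases hA : ∃ v ∈ A, Deficient T v
  · obtain ⟨v, hvA, hv⟩ := hA
    have hfar : farEdges T w ∪ meeting T A ⊆ A.biUnion (candidates T w) := by
      refine union_subset (fun e he => mem_biUnion.2 ⟨v, hvA, ?_⟩)
        (meeting_subset_biUnion_candidates w A)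
      rw [candidates, if_pos hv]
      exact mem_union_right _ he
    have hT' : T ⊆ (farEdges T w ∪ meeting T A) ∪ ((T \ farEdges T w) \ meeting T A) :=
      fun e he => by simp only [mem_union, mem_sdiff]; tauto
    have h1 := (card_le_card hT').trans (card_union_le _ _)
    have h2 := card_sdiff_farEdges_sdiff_meeting_le hw A
    have h3 := card_le_card hfar
    rw [card_compl] at h2
    have h4 := card_le_univ A
    omega
  · simp only [not_exists, not_and] at hA
    exact (card_le_card_meeting A hA).trans
      (card_le_card (meeting_subset_biUnion_candidates w A))

lemma mk_notMem_of_deficient {a b : α} (ha : ¬ Deficient T a) (hb : Deficient T b) :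
    s(a, b) ∉ T := fun h =>
  ha ((deficient_iff_of_mem h (Sym2.mem_mk_left a b) (Sym2.mem_mk_right a b)).2 hb)

variable (T) in
structure HubMatching where
  hub : α
  edge : α → Sym2 α
  hub_not_deficient : ¬ Deficient T hub
  edge_mem : ∀ v, edge v ∈ T
  edge_injective : Injective edge
  edge_surj : ∀ e ∈ T, ∃ v, edge v = e
  not_isDiag_edge : ∀ v, ¬ (edge v).IsDiag
  mem_edge_or : ∀ v, v ∈ edge v ∨ Deficient T v ∧ edge v ∈ farEdges T hub

lemma nonempty_hubMatching [Nonempty α] (hT : #T = Fintype.card α)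
    (hloop : ∀ e ∈ T, ¬ e.IsDiag) : Nonempty (HubMatching T) := by
  obtain ⟨w, hw⟩ := exists_not_deficient hT
  obtain ⟨f, hf, hfc⟩ := (all_card_le_biUnion_card_iff_exists_injective (candidates T w)).1
    (card_le_card_biUnion_candidates hT hw)
  have hmem_or : ∀ v, v ∈ f v ∧ f v ∈ T ∨ Deficient T v ∧ f v ∈ farEdges T w := by
    intro v
    have h := hfc v
    unfold candidates at h
    have hstar : f v ∈ meeting T {v} → v ∈ f v ∧ f v ∈ T := fun h' => by
      obtain ⟨hT', x, hx, hxv⟩ := mem_meeting.1 h'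
      exact ⟨mem_singleton.1 hxv ▸ hx, hT'⟩
    split_ifs at h with hv
    · exact (mem_union.1 h).imp hstar fun h' => ⟨hv, h'⟩
    · exact .inl (hstar h)
  have hfT : ∀ v, f v ∈ T := fun v =>
    (hmem_or v).elim (·.2) fun h => (mem_filter.1 h.2).1
  have himage : univ.image f = T :=
    eq_of_subset_of_card_le (fun e he => by obtain ⟨v, -, rfl⟩ := mem_image.1 he; exact hfT v)
      (by rw [card_image_of_injective _ hf, card_univ, hT])
  exact ⟨{ hub := w, edge := f, hub_not_deficient := hw, edge_mem := hfT, edge_injective := hf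
           edge_surj := fun e he => by
             obtain ⟨v, -, hv⟩ := mem_image.1 (himage ▸ he)
             exact ⟨v, hv⟩
           not_isDiag_edge := fun v => hloop _ (hfT v)
           mem_edge_or := fun v => (hmem_or v).imp_left (·.1) }⟩

namespace HubMatching

variable (P : HubMatching T)

def Displaced (v : α) : Prop := v ∉ P.edge v

variable {P}

lemma Displaced.deficient {v : α} (hv : P.Displaced v) : Deficient T v :=
  ((P.mem_edge_or v).resolve_left hv).1

lemma Displaced.hub_notMem {v : α} (hv : P.Displaced v) : P.hub ∉ P.edge v :=
  (mem_filter.1 ((P.mem_edge_or v).resolve_left hv).2).2.1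

lemma Displaced.not_deficient_of_mem {v x : α} (hv : P.Displaced v) (hx : x ∈ P.edge v) :
    ¬ Deficient T x :=
  (mem_filter.1 ((P.mem_edge_or v).resolve_left hv).2).2.2 x hx

lemma Displaced.ne_hub {v : α} (hv : P.Displaced v) : v ≠ P.hub :=
  fun h => P.hub_not_deficient (h ▸ hv.deficient)

lemma mem_edge_of_not_deficient {v : α} (hv : ¬ Deficient T v) : v ∈ P.edge v :=
  ((P.mem_edge_or v).resolve_right fun h => hv h.1)

lemma not_displaced_of_not_deficient {v : α} (hv : ¬ Deficient T v) : ¬ P.Displaced v :=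
  not_not.2 (P.mem_edge_of_not_deficient hv)

variable (P)

lemma hub_mem_edge : P.hub ∈ P.edge P.hub := P.mem_edge_of_not_deficient P.hub_not_deficient

def mate : α := Sym2.Mem.other P.hub_mem_edge

lemma edge_hub : P.edge P.hub = s(P.hub, P.mate) := (Sym2.other_spec _).symm

lemma mate_ne_hub : P.mate ≠ P.hub := Sym2.other_ne (P.not_isDiag_edge _) _

lemma mate_not_deficient : ¬ Deficient T P.mate := fun h =>
  P.hub_not_deficient ((deficient_iff_of_mem (P.edge_mem P.hub) P.hub_mem_edge
    (Sym2.other_mem _)).2 h)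

lemma mate_mem_edge : P.mate ∈ P.edge P.mate := P.mem_edge_of_not_deficient P.mate_not_deficient

def mateMate : α := Sym2.Mem.other P.mate_mem_edge

lemma edge_mate : P.edge P.mate = s(P.mate, P.mateMate) := (Sym2.other_spec _).symm

lemma mateMate_ne_mate : P.mateMate ≠ P.mate := Sym2.other_ne (P.not_isDiag_edge _) _

lemma mateMate_ne_hub : P.mateMate ≠ P.hub := by
  intro h
  refine P.mate_ne_hub (P.edge_injective ?_)
  rw [edge_mate, edge_hub, h, Sym2.eq_swap]

lemma mateMate_not_deficient : ¬ Deficient T P.mateMate := fun h =>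
  P.mate_not_deficient ((deficient_iff_of_mem (P.edge_mem P.mate) P.mate_mem_edge
    (Sym2.other_mem _)).2 h)

def anchor (v : α) : α := if P.mate ∈ P.edge v then P.mate else (P.edge v).out.1

lemma anchor_mem_edge (v : α) : P.anchor v ∈ P.edge v := by
  unfold anchor
  split_ifs with h
  exacts [h, Sym2.out_fst_mem _]

def ownerFrom (z a : α) : Option (Sym2 α) :=
  if a = P.anchor z then some (P.edge z)
  else if P.edge z = s(P.mate, a) then some (P.edge a)
  else if a = P.mate ∨ a = P.mateMate ∧ P.mate ∈ P.edge z then some (P.edge P.mate)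
  else none

/-- The part receiving an edge outside `T`. Spokes `s(hub, v)` go to `edge v`, and a displaced
`z` is tied to its edge by `s(anchor z, z)`; the part of `edge mate`, the only one that may lack
a spoke, collects the edges at `mate`. The middle clauses of `ownerFrom` serve the one case where
that part would miss another one: `edge z = s(mate, a)` with `z` displaced, where `anchor z = mate`
leaves `s(a, z)` free. -/
def owner (ε : Sym2 α) : Option (Sym2 α) :=
  if h : P.hub ∈ ε then some (P.edge (Sym2.Mem.other h))
  else if h : ∃ z ∈ ε, P.Displaced z then P.ownerFrom h.choose (Sym2.Mem.other h.choose_spec.1)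
  else if P.mate ∈ ε then some (P.edge P.mate)
  else none

def part (q : Sym2 α) : Set (Sym2 α) := insert q {ε | ¬ ε.IsDiag ∧ ε ∉ T ∧ P.owner ε = some q}

variable {P}

lemma owner_hub_edge (z : α) : P.owner s(P.hub, z) = some (P.edge z) := by
  have h := Sym2.mem_mk_left P.hub z
  rw [owner, dif_pos h, Sym2.congr_right.1 (Sym2.other_spec h)]

lemma owner_of_displaced {z a : α} (hz : P.Displaced z) (ha : ¬ P.Displaced a)
    (haw : a ≠ P.hub) : P.owner s(a, z) = P.ownerFrom z a := by
  have hw : P.hub ∉ s(a, z) := by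
    rw [Sym2.mem_iff, not_or]
    exact ⟨haw.symm, hz.ne_hub.symm⟩
  have key : ∀ c (hc : c ∈ s(a, z)), P.Displaced c →
      P.ownerFrom c (Sym2.Mem.other hc) = P.ownerFrom z a := by
    intro c hc hcd
    obtain rfl : c = z := (Sym2.mem_iff.1 hc).resolve_left fun h => ha (h ▸ hcd)
    rw [Sym2.congr_right.1 ((Sym2.other_spec hc).trans (Sym2.eq_swap))]
  have hex : ∃ c ∈ s(a, z), P.Displaced c := ⟨z, Sym2.mem_mk_right a z, hz⟩
  rw [owner, dif_neg hw, dif_pos hex]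
  exact key _ _ hex.choose_spec.2

lemma owner_mate_edge {x : α} (hx : ¬ P.Displaced x) (hxw : x ≠ P.hub) :
    P.owner s(P.mate, x) = some (P.edge P.mate) := by
  have hw : P.hub ∉ s(P.mate, x) := by
    rw [Sym2.mem_iff, not_or]
    exact ⟨P.mate_ne_hub.symm, hxw.symm⟩
  have hd : ¬ ∃ c ∈ s(P.mate, x), P.Displaced c := by
    rintro ⟨c, hc, hcd⟩
    rcases Sym2.mem_iff.1 hc with rfl | rfl
    exacts [not_displaced_of_not_deficient P.mate_not_deficient hcd, hx hcd]
  rw [owner, dif_neg hw, dif_neg hd, if_pos (Sym2.mem_mk_left _ _)]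

lemma mem_part_self (q : Sym2 α) : q ∈ P.part q := Set.mem_insert q _

lemma mem_part {ε q : Sym2 α} (hd : ¬ ε.IsDiag) (hT : ε ∉ T) (h : P.owner ε = some q) :
    ε ∈ P.part q :=
  Set.mem_insert_of_mem _ ⟨hd, hT, h⟩

lemma eq_of_mem_part {ε q : Sym2 α} (hε : ε ∈ P.part q) (hT : ε ∈ T) : ε = q :=
  (Set.mem_insert_iff.1 hε).resolve_right fun h => h.2.1 hT

lemma spoke_mem_part {v : α} (hv : P.Displaced v) : s(P.hub, v) ∈ P.part (P.edge v) :=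
  mem_part (by simpa [Sym2.mk_isDiag_iff] using hv.ne_hub.symm)
    (mk_notMem_of_deficient P.hub_not_deficient hv.deficient) (owner_hub_edge v)

lemma connector_mem_part {v : α} (hv : P.Displaced v) :
    s(P.anchor v, v) ∈ P.part (P.edge v) := by
  have ha := hv.not_deficient_of_mem (P.anchor_mem_edge v)
  have haw : P.anchor v ≠ P.hub := fun h => hv.hub_notMem (h ▸ P.anchor_mem_edge v)
  refine mem_part ?_ (mk_notMem_of_deficient ha hv.deficient) ?_
  · rw [Sym2.mk_isDiag_iff]
    exact fun h => ha (h.symm ▸ hv.deficient)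
  · rw [owner_of_displaced hv (not_displaced_of_not_deficient ha) haw, ownerFrom, if_pos rfl]

lemma mate_edge_mem_part {x : α} (hxw : x ≠ P.hub) (hxm : x ≠ P.mate) (hT : s(P.mate, x) ∉ T)
    (hx : P.Displaced x → P.mate ∉ P.edge x) : s(P.mate, x) ∈ P.part (P.edge P.mate) := by
  refine mem_part (by simpa [Sym2.mk_isDiag_iff] using hxm.symm) hT ?_
  by_cases hxd : P.Displaced x
  · have hm := hx hxd
    rw [owner_of_displaced hxd
      (not_displaced_of_not_deficient P.mate_not_deficient) P.mate_ne_hub, ownerFrom,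
      if_neg fun (h : P.mate = P.anchor x) => hm (h ▸ P.anchor_mem_edge x),
      if_neg fun (h : P.edge x = s(P.mate, P.mate)) => hm (h ▸ Sym2.mem_mk_left _ _),
      if_pos (.inl rfl)]
  · exact owner_mate_edge hxd hxw

lemma anchor_eq_mate {u : α} (hu : P.mate ∈ P.edge u) : P.anchor u = P.mate := by
  rw [anchor, if_pos hu]

lemma ne_mate_of_edge_eq {u a : α} (hua : P.edge u = s(P.mate, a)) : a ≠ P.mate := by
  rintro rfl
  exact P.not_isDiag_edge u (hua ▸ Sym2.mk_isDiag_iff.2 rfl)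

section Repair

variable {u a : α} (hu : P.Displaced u) (hua : P.edge u = s(P.mate, a))
include hu hua

lemma repair_mem_part : s(a, u) ∈ P.part (P.edge a) := by
  have ha := hu.not_deficient_of_mem (hua ▸ Sym2.mem_mk_right _ _)
  have haw : a ≠ P.hub := fun h => hu.hub_notMem (hua ▸ h ▸ Sym2.mem_mk_right _ _)
  refine mem_part ?_ (mk_notMem_of_deficient ha hu.deficient) ?_
  · rw [Sym2.mk_isDiag_iff]
    exact fun h => ha (h ▸ hu.deficient)
  · rw [owner_of_displaced hu (not_displaced_of_not_deficient ha) haw, ownerFrom,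
      anchor_eq_mate (hua ▸ Sym2.mem_mk_left _ _), if_neg (ne_mate_of_edge_eq hua), if_pos hua]

lemma repair_mem_part_edge_mate : s(P.mateMate, u) ∈ P.part (P.edge P.mate) := by
  have hz := P.mateMate_not_deficient
  refine mem_part ?_ (mk_notMem_of_deficient hz hu.deficient) ?_
  · rw [Sym2.mk_isDiag_iff]
    exact fun h => hz (h ▸ hu.deficient)
  · have hne : P.edge u ≠ s(P.mate, P.mateMate) := by
      rw [← edge_mate]
      exact fun h => not_displaced_of_not_deficient P.mate_not_deficient
        (P.edge_injective h ▸ hu)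
    rw [owner_of_displaced hu (not_displaced_of_not_deficient hz) P.mateMate_ne_hub, ownerFrom,
      anchor_eq_mate (hua ▸ Sym2.mem_mk_left _ _), if_neg P.mateMate_ne_mate, if_neg hne,
      if_pos (.inr ⟨rfl, hua ▸ Sym2.mem_mk_left _ _⟩)]

end Repair

lemma mem_of_ownerFrom_eq_some {z a : α} {q : Sym2 α} (hz : P.Displaced z)
    (h : P.ownerFrom z a = some q) : a ∈ q := by
  unfold ownerFrom at h
  split_ifs at h with h₁ h₂ h₃ <;> obtain rfl := Option.some.inj h
  · exact h₁ ▸ P.anchor_mem_edge z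
  · exact P.mem_edge_of_not_deficient (hz.not_deficient_of_mem (h₂ ▸ Sym2.mem_mk_right _ _))
  · rcases h₃ with rfl | ⟨rfl, -⟩
    exacts [P.mate_mem_edge, Sym2.other_mem _]

lemma owner_eq_some {ε q : Sym2 α} (h : P.owner ε = some q) :
    (∃ x ∈ ε, x ∈ q) ∨ ∃ v, P.Displaced v ∧ P.edge v = q ∧ ε = s(P.hub, v) := by
  unfold owner at h
  split_ifs at h with h₁ h₂ h₃
  · obtain rfl := Option.some.inj h
    by_cases hd : P.Displaced (Sym2.Mem.other h₁)
    · exact .inr ⟨_, hd, rfl, (Sym2.other_spec h₁).symm⟩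
    · exact .inl ⟨_, Sym2.other_mem h₁, not_not.1 hd⟩
  · exact .inl ⟨_, Sym2.other_mem _, mem_of_ownerFrom_eq_some h₂.choose_spec.2 h⟩
  · obtain rfl := Option.some.inj h
    exact .inl ⟨P.mate, h₃, P.mate_mem_edge⟩

/-- Every edge of a part meets its `T`-edge, except a spoke `s(hub, v)`, which reaches it
through the connector `s(anchor v, v)`. -/
lemma part_connected (q : Sym2 α) : EdgesConnected (P.part q) := by
  refine .of_forall_reflTransGen (mem_part_self q) fun ε hε => ?_
  obtain rfl | ⟨-, -, hown⟩ := Set.mem_insert_iff.1 hε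
  · exact .refl
  obtain ⟨x, hxε, hxq⟩ | ⟨v, hv, rfl, rfl⟩ := owner_eq_some hown
  · exact .single ⟨mem_part_self _, hε, x, hxq, hxε⟩
  · have hc := connector_mem_part hv
    exact .tail (.single ⟨mem_part_self _, hc, _, P.anchor_mem_edge v, Sym2.mem_mk_left _ _⟩)
      ⟨hc, hε, v, Sym2.mem_mk_right _ _, Sym2.mem_mk_right _ _⟩

lemma exists_spoke_mem_part {q : Sym2 α} (hq : q ∈ T) (hqm : q ≠ P.edge P.mate) :
    ∃ ε ∈ P.part q, P.hub ∈ ε := by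
  obtain ⟨v, rfl⟩ := P.edge_surj q hq
  by_cases hv : P.Displaced v
  · exact ⟨_, spoke_mem_part hv, Sym2.mem_mk_left _ _⟩
  by_cases hw : P.hub ∈ P.edge v
  · exact ⟨_, mem_part_self _, hw⟩
  have hvw : v ≠ P.hub := fun h => hw (h ▸ not_not.1 hv)
  refine ⟨s(P.hub, v), mem_part ?_ ?_ (owner_hub_edge v), Sym2.mem_mk_left _ _⟩
  · simpa [Sym2.mk_isDiag_iff] using hvw.symm
  intro hT
  obtain ⟨u, hu⟩ := P.edge_surj _ hT
  have hud : u ∈ P.edge u :=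
    not_not.1 fun (hud : P.Displaced u) => hud.hub_notMem (hu ▸ Sym2.mem_mk_left _ _)
  rcases Sym2.mem_iff.1 (hu ▸ hud) with rfl | rfl
  · exact hqm (congrArg P.edge (Sym2.congr_right.1 (P.edge_hub.symm.trans hu)).symm)
  · exact hw (hu ▸ Sym2.mem_mk_left _ _)

/-- The part of `edge mate` meets the part of `edge v`: through `s(mate, v)` when that edge is
outside `T`, and otherwise through the displaced vertex `u` with `edge u = s(mate, v)`. -/
lemma part_edge_mate_incident {q : Sym2 α} (hq : q ∈ T) (hqm : q ≠ P.edge P.mate) :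
    EdgesIncident (P.part (P.edge P.mate)) (P.part q) := by
  obtain ⟨v, rfl⟩ := P.edge_surj q hq
  have hvm : v ≠ P.mate := fun h => hqm (h ▸ rfl)
  by_cases hmq : P.mate ∈ P.edge v
  · exact ⟨_, mem_part_self _, _, mem_part_self _, P.mate, P.mate_mem_edge, hmq⟩
  by_cases hv : P.Displaced v
  · exact ⟨_, mate_edge_mem_part hv.ne_hub hvm
      (mk_notMem_of_deficient P.mate_not_deficient hv.deficient) fun _ => hmq,
      _, spoke_mem_part hv, v, Sym2.mem_mk_right _ _, Sym2.mem_mk_right _ _⟩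
  have hvv : v ∈ P.edge v := not_not.1 hv
  have hvw : v ≠ P.hub := fun h => hmq (h ▸ P.edge_hub ▸ Sym2.mem_mk_right _ _)
  by_cases hT : s(P.mate, v) ∈ T
  · obtain ⟨u, hu⟩ := P.edge_surj _ hT
    by_cases hud : P.Displaced u
    · exact ⟨_, repair_mem_part_edge_mate hud hu, _, repair_mem_part hud hu, u,
        Sym2.mem_mk_right _ _, Sym2.mem_mk_right _ _⟩
    rcases Sym2.mem_iff.1 (hu ▸ not_not.1 hud) with rfl | rfl
    · exact ⟨_, mem_part_self _, _, mem_part_self _, v, hu ▸ Sym2.mem_mk_right _ _, hvv⟩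
    · exact absurd (hu ▸ Sym2.mem_mk_left _ _) hmq
  · exact ⟨_, mate_edge_mem_part hvw hvm hT fun h => absurd h hv, _, mem_part_self _, v,
      Sym2.mem_mk_right _ _, hvv⟩

lemma part_incident {p q : Sym2 α} (hp : p ∈ T) (hq : q ∈ T) (hpq : p ≠ q) :
    EdgesIncident (P.part p) (P.part q) := by
  by_cases hpm : p = P.edge P.mate
  · exact hpm ▸ part_edge_mate_incident hq (hpm ▸ hpq.symm)
  by_cases hqm : q = P.edge P.mate
  · exact (hqm ▸ part_edge_mate_incident hp hpm).symm
  obtain ⟨ε, hε, hwε⟩ := exists_spoke_mem_part hp hpm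
  obtain ⟨ε', hε', hwε'⟩ := exists_spoke_mem_part hq hqm
  exact ⟨ε, hε, ε', hε', P.hub, hwε, hwε'⟩

lemma part_disjoint {p q : Sym2 α} (hp : p ∈ T) (hq : q ∈ T) (hpq : p ≠ q) :
    Disjoint (P.part p) (P.part q) := by
  refine Set.disjoint_left.2 fun ε hεp hεq => ?_
  obtain rfl | ⟨-, hT, hown⟩ := Set.mem_insert_iff.1 hεp
  · exact hpq (eq_of_mem_part hεq hp)
  obtain rfl | ⟨-, -, hown'⟩ := Set.mem_insert_iff.1 hεq
  · exact hT hq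
  · exact hpq (Option.some.inj (hown.symm.trans hown'))

variable (P)

lemma part_subset_edgeSet {q : Sym2 α} (hq : q ∈ T) :
    P.part q ⊆ (⊤ : SimpleGraph α).edgeSet := by
  rintro ε (rfl | ⟨hd, -⟩)
  · obtain ⟨v, rfl⟩ := P.edge_surj ε hq
    simpa [SimpleGraph.edgeSet_top] using P.not_isDiag_edge v
  · simpa [SimpleGraph.edgeSet_top] using hd

theorem image_part_spec :
    (P.part '' T).ncard = #T ∧
      (∀ A ∈ P.part '' T, A ⊆ (⊤ : SimpleGraph α).edgeSet) ∧
      (∀ A ∈ P.part '' T, EdgesConnected A) ∧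
      (∀ A ∈ P.part '' T, ∀ B ∈ P.part '' T, A ≠ B → Disjoint A B) ∧
      (∀ A ∈ P.part '' T, ∀ B ∈ P.part '' T, A ≠ B → EdgesIncident A B) ∧
      TraversedBy (P.part '' T) (T : Set (Sym2 α)) := by
  have hinj : Set.InjOn P.part T := fun p hp q _ hpq =>
    eq_of_mem_part (hpq ▸ mem_part_self p) hp
  refine ⟨hinj.ncard_image.trans (Set.ncard_coe_finset T), ?_, ?_, ?_, ?_,
    ⟨?_, fun q hq => ⟨_, Set.mem_image_of_mem _ hq, mem_part_self q⟩⟩⟩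
  · rintro _ ⟨q, hq, rfl⟩
    exact P.part_subset_edgeSet hq
  · rintro _ ⟨q, -, rfl⟩
    exact part_connected q
  · rintro _ ⟨p, hp, rfl⟩ _ ⟨q, hq, rfl⟩ hpq
    exact part_disjoint hp hq (ne_of_apply_ne _ hpq)
  · rintro _ ⟨p, hp, rfl⟩ _ ⟨q, hq, rfl⟩ hpq
    exact part_incident hp hq (ne_of_apply_ne _ hpq)
  · rintro _ ⟨q, hq, rfl⟩
    exact ⟨q, ⟨hq, mem_part_self q⟩, fun e he => eq_of_mem_part he.2 he.1⟩

end HubMatching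

theorem exists_traversal [Nonempty α] (T : Set (Sym2 α))
    (hT : T ⊆ (⊤ : SimpleGraph α).edgeSet) (hTn : T.ncard = Fintype.card α) :
    ∃ 𝔎 : Set (Set (Sym2 α)), 𝔎.ncard = Fintype.card α ∧
      (∀ A ∈ 𝔎, A ⊆ (⊤ : SimpleGraph α).edgeSet) ∧
      (∀ A ∈ 𝔎, EdgesConnected A) ∧
      (∀ A ∈ 𝔎, ∀ B ∈ 𝔎, A ≠ B → Disjoint A B) ∧
      (∀ A ∈ 𝔎, ∀ B ∈ 𝔎, A ≠ B → EdgesIncident A B) ∧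
      TraversedBy 𝔎 T := by
  have hcard : #T.toFinite.toFinset = Fintype.card α := by
    rw [← Set.ncard_eq_toFinset_card, hTn]
  have hloop : ∀ e ∈ T.toFinite.toFinset, ¬ e.IsDiag := fun e he =>
    SimpleGraph.not_isDiag_of_mem_edgeSet _ (hT (T.toFinite.mem_toFinset.1 he))
  obtain ⟨P⟩ := nonempty_hubMatching hcard hloop
  have h := P.image_part_spec
  rw [hcard, T.toFinite.coe_toFinset] at h
  exact ⟨_, h⟩

end

end CompleteGraphTraversal

/-- For every set `T` of `n` edges of the complete graph on `n ≥ 3` vertices there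
is a family of `n` connected, pairwise disjoint, pairwise incident edge sets
traversed by `T`. -/
theorem complete_graph_traversal (n : ℕ) (hn : 3 ≤ n)
    (T : Set (Sym2 (Fin n))) (hT : T ⊆ (⊤ : SimpleGraph (Fin n)).edgeSet)
    (hTn : T.ncard = n) :
    ∃ 𝔎 : Set (Set (Sym2 (Fin n))), 𝔎.ncard = n ∧
      (∀ A ∈ 𝔎, A ⊆ (⊤ : SimpleGraph (Fin n)).edgeSet) ∧
      (∀ A ∈ 𝔎, EdgesConnected A) ∧
      (∀ A ∈ 𝔎, ∀ B ∈ 𝔎, A ≠ B → Disjoint A B) ∧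
      (∀ A ∈ 𝔎, ∀ B ∈ 𝔎, A ≠ B → EdgesIncident A B) ∧
      TraversedBy 𝔎 T := by
  have : NeZero n := ⟨by omega⟩
  simpa using CompleteGraphTraversal.exists_traversal T hT (by simpa using hTn)
end

section
/- Let H be a graph containing a pair of parallel edges, and let 𝔠 be a partition of E(H) into matchings such that the union of any two matchings in 𝔠 is a connected edge set. Then for every transversal T of 𝔠 there exists a family of connected, pairwise disjoint, pairwise incident edge sets traversed by T. -/
/-- A multigraph (possibly with parallel edges, but loopless): each edge `e` has a
pair of distinct endpoints `ends e`. -/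
structure Multigraph (V E : Type*) where
  ends : E → Sym2 V
  not_isDiag : ∀ e, ¬ (ends e).IsDiag

namespace Multigraph

variable {V E : Type*} (G : Multigraph V E)

/-- A matching: a set of pairwise non-incident edges. -/
def Matching (M : Set E) : Prop :=
  ∀ e ∈ M, ∀ f ∈ M, e ≠ f → ¬ ∃ v : V, v ∈ G.ends e ∧ v ∈ G.ends f

/-- An edge set `F` is connected if it is nonempty and any two of its edges are
linked by a chain of edges of `F`, consecutive ones sharing an endpoint. -/
def EdgesConnected (F : Set E) : Prop :=
  F.Nonempty ∧ ∀ e ∈ F, ∀ f ∈ F,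
    Relation.ReflTransGen
      (fun a b => a ∈ F ∧ b ∈ F ∧ ∃ v : V, v ∈ G.ends a ∧ v ∈ G.ends b) e f

/-- Two edge sets are incident if some edge of one shares an endpoint with some
edge of the other. -/
def EdgesIncident (F F' : Set E) : Prop :=
  ∃ e ∈ F, ∃ f ∈ F', ∃ v : V, v ∈ G.ends e ∧ v ∈ G.ends f

end Multigraph

/-- `𝔠` is a partition of a set into nonempty, pairwise disjoint classes covering
everything. -/
def IsEdgePartition {E : Type*} (𝔠 : Set (Set E)) : Prop :=
  (∀ M ∈ 𝔠, M.Nonempty) ∧ (⋃₀ 𝔠 = Set.univ) ∧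
  (∀ M ∈ 𝔠, ∀ N ∈ 𝔠, M ≠ N → Disjoint M N)

/-!
Let `u, v` be the ends of the parallel edges `e, f`. In the union of two matchings, two parallel
edges of different matchings together with the edges parallel to them form a component; hence
the class of `e` is `{e}`, and connectivity of its union with any other class makes every edge
meet `e`, that is, pass through `u` or `v`. If `t, s ∈ T` are disjoint, connectivity of the union
of their classes yields an edge of the class of `s` meeting `t` and an edge of the class of `t`
meeting `s`, which meet each other; moreover `t` is disjoint from at most one `s ∈ T`. Adding
these edges to each `t ∈ T` gives the required family.
-/
theorem Relation.ReflTransGen.exists_rel_mem_not_mem {α : Type*} {r : α → α → Prop}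
    {S : Set α} {a b : α} (h : Relation.ReflTransGen r a b) (ha : a ∈ S) (hb : b ∉ S) :
    ∃ x y, r x y ∧ x ∈ S ∧ y ∉ S := by
  induction h with
  | refl => exact absurd ha hb
  | @tail c d _ hcd ih =>
    by_cases hc : c ∈ S
    · exact ⟨c, d, hcd, hc, hb⟩
    · exact ih hc

theorem traversedBy_image {α : Type*} {T : Set α} {A : α → Set α}
    (h : ∀ t ∈ T, ∀ s ∈ T, s ∈ A t ↔ s = t) (hA : ∀ t, t ∈ A t) : TraversedBy (A '' T) T := by
  refine ⟨?_, fun t ht => ⟨A t, ⟨t, ht, rfl⟩, hA t⟩⟩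
  rintro _ ⟨t, ht, rfl⟩
  exact ⟨t, ⟨ht, hA t⟩, fun s ⟨hs, hsA⟩ => (h t ht s hs).1 hsA⟩

theorem IsEdgePartition.exists_mem {E : Type*} {𝔠 : Set (Set E)} (h : IsEdgePartition 𝔠)
    (x : E) : ∃ N ∈ 𝔠, x ∈ N :=
  Set.sUnion_eq_univ_iff.1 h.2.1 x

theorem IsEdgePartition.eq_of_mem {E : Type*} {𝔠 : Set (Set E)} (h : IsEdgePartition 𝔠)
    {N N' : Set E} {x : E} (hN : N ∈ 𝔠) (hN' : N' ∈ 𝔠) (hx : x ∈ N) (hx' : x ∈ N') :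
    N = N' := by
  by_contra hne
  exact Set.disjoint_left.1 (h.2.2 N hN N' hN' hne) hx hx'

theorem ne_of_mem_transversal {E : Type*} {𝔠 : Set (Set E)} {T : Set E}
    (hT : ∀ M ∈ 𝔠, ∃! e, e ∈ T ∧ e ∈ M) {N N' : Set E} {t t' : E} (hN : N ∈ 𝔠)
    (ht : t ∈ T) (ht' : t' ∈ T) (htN : t ∈ N) (ht'N' : t' ∈ N') (hne : t ≠ t') : N ≠ N' := by
  rintro rfl
  exact hne ((hT N hN).unique ⟨ht, htN⟩ ⟨ht', ht'N'⟩)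

namespace Multigraph

variable {V E : Type*} {G : Multigraph V E}

variable (G) in
def Meet (a b : E) : Prop :=
  ∃ v : V, v ∈ G.ends a ∧ v ∈ G.ends b

theorem Meet.symm {a b : E} : G.Meet a b → G.Meet b a
  | ⟨w, ha, hb⟩ => ⟨w, hb, ha⟩

theorem meet_of_ends_eq {a b : E} (h : G.ends a = G.ends b) : G.Meet a b :=
  ⟨_, Sym2.out_fst_mem _, h ▸ Sym2.out_fst_mem _⟩

theorem meet_self (a : E) : G.Meet a a :=
  meet_of_ends_eq rfl

theorem Matching.eq_of_meet {M : Set E} (hM : G.Matching M) {a b : E} (ha : a ∈ M)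
    (hb : b ∈ M) (h : G.Meet a b) : a = b := by
  by_contra hne
  exact hM a ha b hb hne h

theorem EdgesConnected.exists_meet_mem_not_mem {F : Set E} (hF : G.EdgesConnected F)
    {S : Set E} {a b : E} (ha : a ∈ F) (hb : b ∈ F) (haS : a ∈ S) (hbS : b ∉ S) :
    ∃ x ∈ F, ∃ y ∈ F, x ∈ S ∧ y ∉ S ∧ G.Meet x y := by
  obtain ⟨x, y, ⟨hx, hy, hxy⟩, hxS, hyS⟩ := (hF.2 a ha b hb).exists_rel_mem_not_mem haS hbS
  exact ⟨x, hx, y, hy, hxS, hyS, hxy⟩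

theorem edgesConnected_of_meet {F : Set E} {t : E} (ht : t ∈ F)
    (h : ∀ g ∈ F, G.Meet t g) : G.EdgesConnected F := by
  refine ⟨⟨t, ht⟩, fun a ha b hb => ?_⟩
  exact .tail (.single ⟨ha, ht, (h a ha).symm⟩) ⟨ht, hb, h b hb⟩

theorem ends_eq_of_meet {p q : E} {u v z : V} (hp : G.ends p = s(v, z)) (hu : u ∈ G.ends q)
    (hup : u ∉ G.ends p) (hvq : v ∉ G.ends q) (h : G.Meet p q) : G.ends q = s(u, z) := by
  obtain ⟨w, hwp, hwq⟩ := h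
  rw [hp, Sym2.mem_iff] at hwp
  obtain rfl | rfl := hwp
  · exact absurd hwq hvq
  · refine (Sym2.mem_and_mem_iff ?_).1 ⟨hu, hwq⟩
    rintro rfl
    exact hup (hp ▸ Sym2.mem_mk_right _ _)

theorem Matching.ends_eq_of_edgesConnected_union {M M' : Set E} (hM : G.Matching M)
    (hM' : G.Matching M') (hconn : G.EdgesConnected (M ∪ M')) {q q' x : E} (hq : q ∈ M)
    (hq' : q' ∈ M') (hpar : G.ends q = G.ends q') (hx : x ∈ M ∪ M') : G.ends x = G.ends q := by
  by_contra hxq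
  obtain ⟨a, -, b, hb, hqa, hqb, w, hwa, hwb⟩ :=
    hconn.exists_meet_mem_not_mem (S := {y | G.ends y = G.ends q}) (Or.inl hq) hx rfl hxq
  have hwq : w ∈ G.ends q := hqa ▸ hwa
  -- `b` meets the parallel edge of its own matching, so it is that edge
  rcases hb with hb | hb
  · exact hqb (congrArg G.ends (hM.eq_of_meet hb hq ⟨w, hwb, hwq⟩))
  · exact hqb ((congrArg G.ends (hM'.eq_of_meet hb hq' ⟨w, hwb, hpar ▸ hwq⟩)).trans hpar.symm)

theorem Matching.meet_of_edgesConnected_insert {M : Set E} (hM : G.Matching M) {e g : E}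
    (hconn : G.EdgesConnected (insert e M)) (hg : g ∈ M) : G.Meet e g := by
  by_contra heg
  obtain ⟨a, ha, b, hb, hea, heb, hab⟩ := hconn.exists_meet_mem_not_mem
    (S := {y | G.Meet e y}) (Set.mem_insert e M) (Set.mem_insert_of_mem e hg) (meet_self e) heg
  rcases hb with rfl | hb
  · exact heb (meet_self _)
  rcases ha with rfl | ha
  · exact heb hab
  · exact heb (hM.eq_of_meet ha hb hab ▸ hea)

section PartitionIntoMatchings

variable {𝔠 : Set (Set E)}

theorem eq_singleton_of_ends_eq (hpart : IsEdgePartition 𝔠) (hmatch : ∀ M ∈ 𝔠, G.Matching M)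
    (hconn : ∀ M ∈ 𝔠, ∀ N ∈ 𝔠, M ≠ N → G.EdgesConnected (M ∪ N)) {e f : E} (hef : e ≠ f)
    (hpar : G.ends e = G.ends f) {N : Set E} (hN : N ∈ 𝔠) (heN : e ∈ N) : N = {e} := by
  obtain ⟨N', hN', hfN'⟩ := hpart.exists_mem f
  have hNN' : N ≠ N' := by
    rintro rfl
    exact hef ((hmatch N hN).eq_of_meet heN hfN' (meet_of_ends_eq hpar))
  refine Set.eq_singleton_iff_unique_mem.2 ⟨heN, fun g hg => ?_⟩
  have hge : G.ends g = G.ends e := (hmatch N hN).ends_eq_of_edgesConnected_union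
    (hmatch N' hN') (hconn N hN N' hN' hNN') heN hfN' hpar (Or.inl hg)
  exact (hmatch N hN).eq_of_meet hg heN (meet_of_ends_eq hge)

theorem meet_of_ends_eq_of_ne (hpart : IsEdgePartition 𝔠) (hmatch : ∀ M ∈ 𝔠, G.Matching M)
    (hconn : ∀ M ∈ 𝔠, ∀ N ∈ 𝔠, M ≠ N → G.EdgesConnected (M ∪ N)) {e f : E} (hef : e ≠ f)
    (hpar : G.ends e = G.ends f) (g : E) : G.Meet e g := by
  obtain ⟨N, hN, heN⟩ := hpart.exists_mem e
  obtain ⟨N', hN', hgN'⟩ := hpart.exists_mem g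
  have hNe : N = {e} := eq_singleton_of_ends_eq hpart hmatch hconn hef hpar hN heN
  by_cases hNN' : N' = N
  · rw [hNN', hNe, Set.mem_singleton_iff] at hgN'
    rw [hgN']
    exact meet_self e
  · have hconn' := hconn N' hN' N hN hNN'
    rw [hNe, Set.union_singleton] at hconn'
    exact (hmatch N' hN').meet_of_edgesConnected_insert hconn' hgN'

end PartitionIntoMatchings

section ThroughTwoVertices

variable {u v : V}

theorem exists_meet_of_not_meet_of_mem_ends {M M' : Set E} (hM : G.Matching M)
    (hM' : G.Matching M') (hconn : G.EdgesConnected (M ∪ M'))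
    (htouch : ∀ g, u ∈ G.ends g ∨ v ∈ G.ends g) {t t' : E} (ht : t ∈ M) (ht' : t' ∈ M')
    (hut : u ∈ G.ends t) (htt' : ¬ G.Meet t t') :
    ∃ p ∈ M, ∃ p' ∈ M', v ∈ G.ends p ∧ u ∉ G.ends p ∧ u ∈ G.ends p' ∧ v ∉ G.ends p' ∧
      G.Meet p p' := by
  have hut' : u ∉ G.ends t' := fun h => htt' ⟨u, hut, h⟩
  have hvt' : v ∈ G.ends t' := (htouch t').resolve_left hut'
  obtain ⟨a, ha, b, hb, hua, hub, hab⟩ := hconn.exists_meet_mem_not_mem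
    (S := {y | u ∈ G.ends y}) (Or.inl ht) (Or.inr ht') hut hut'
  have hvb : v ∈ G.ends b := (htouch b).resolve_left hub
  have hne : a ≠ b := fun h => hub (h ▸ hua)
  have haM' : a ∈ M' := by
    refine ha.resolve_left fun ha => ?_
    obtain rfl := hM.eq_of_meet ha ht ⟨u, hua, hut⟩
    rcases hb with hb | hb
    · exact hne (hM.eq_of_meet ha hb hab)
    · exact htt' (hM'.eq_of_meet hb ht' ⟨v, hvb, hvt'⟩ ▸ hab)
  have hbM : b ∈ M := hb.resolve_right fun hb => hne (hM'.eq_of_meet haM' hb hab)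
  have hva : v ∉ G.ends a := fun hva => hut' (hM'.eq_of_meet haM' ht' ⟨v, hva, hvt'⟩ ▸ hua)
  exact ⟨b, hbM, a, haM', hvb, hub, hua, hva, hab.symm⟩

theorem exists_meet_of_not_meet {M M' : Set E} (hM : G.Matching M) (hM' : G.Matching M')
    (hconn : G.EdgesConnected (M ∪ M')) (htouch : ∀ g, u ∈ G.ends g ∨ v ∈ G.ends g)
    {t t' : E} (ht : t ∈ M) (ht' : t' ∈ M') (htt' : ¬ G.Meet t t') :
    ∃ p ∈ M, ∃ p' ∈ M', p ≠ t ∧ p' ≠ t' ∧ G.Meet t p' ∧ G.Meet t' p ∧ G.Meet p p' := by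
  wlog hut : u ∈ G.ends t generalizing u v
  · exact this (fun g => (htouch g).symm) ((htouch t).resolve_left hut)
  have hut' : u ∉ G.ends t' := fun h => htt' ⟨u, hut, h⟩
  have hvt' : v ∈ G.ends t' := (htouch t').resolve_left hut'
  obtain ⟨p, hp, p', hp', hvp, hup, hup', -, hpp'⟩ :=
    exists_meet_of_not_meet_of_mem_ends hM hM' hconn htouch ht ht' hut htt'
  exact ⟨p, hp, p', hp', fun h => hup (h ▸ hut), fun h => hut' (h ▸ hup'), ⟨u, hut, hup'⟩,
    ⟨v, hvt', hvp⟩, hpp'⟩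

theorem meet_of_not_meet {N N₁ N₂ : Set E} (hN : G.Matching N) (hN₁ : G.Matching N₁)
    (hN₂ : G.Matching N₂) (hconn₁ : G.EdgesConnected (N ∪ N₁))
    (hconn₂ : G.EdgesConnected (N ∪ N₂)) (hconn₁₂ : G.EdgesConnected (N₁ ∪ N₂))
    (htouch : ∀ g, u ∈ G.ends g ∨ v ∈ G.ends g) {t t₁ t₂ : E} (ht : t ∈ N) (ht₁ : t₁ ∈ N₁)
    (ht₂ : t₂ ∈ N₂) (htt₁ : ¬ G.Meet t t₁) : G.Meet t t₂ := by
  wlog hut : u ∈ G.ends t generalizing u v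
  · exact this (fun g => (htouch g).symm) ((htouch t).resolve_left hut)
  by_contra htt₂
  obtain ⟨p, hp, q₁, hq₁, hvp, hup, huq₁, hvq₁, hpq₁⟩ :=
    exists_meet_of_not_meet_of_mem_ends hN hN₁ hconn₁ htouch ht ht₁ hut htt₁
  obtain ⟨p₂, hp₂, q₂, hq₂, hvp₂, -, huq₂, hvq₂, hpq₂⟩ :=
    exists_meet_of_not_meet_of_mem_ends hN hN₂ hconn₂ htouch ht ht₂ hut htt₂
  obtain rfl := hN.eq_of_meet hp hp₂ ⟨v, hvp, hvp₂⟩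
  obtain ⟨z, hz⟩ := Sym2.mem_iff_exists.1 hvp
  have hq₁z : G.ends q₁ = s(u, z) := ends_eq_of_meet hz huq₁ hup hvq₁ hpq₁
  have hq₂z : G.ends q₂ = s(u, z) := ends_eq_of_meet hz huq₂ hup hvq₂ hpq₂
  have ht₂q₁ : G.ends t₂ = G.ends q₁ := hN₁.ends_eq_of_edgesConnected_union hN₂ hconn₁₂ hq₁ hq₂
    (hq₁z.trans hq₂z.symm) (Or.inr ht₂)
  exact htt₂ ⟨u, hut, ht₂q₁ ▸ huq₁⟩

end ThroughTwoVertices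

section Transversal

variable {𝔠 : Set (Set E)} {T : Set E} {u v : V}

variable (G) in
/-- An edge of the class of some `s ∈ T` disjoint from `t` that meets `t` links the blocks of `t`
and `s`. -/
def block (𝔠 : Set (Set E)) (T : Set E) (t : E) : Set E :=
  insert t {g | g ∉ T ∧ G.Meet t g ∧ ∃ s ∈ T, ¬ G.Meet t s ∧ ∃ N ∈ 𝔠, g ∈ N ∧ s ∈ N}

theorem mem_block_self (t : E) : t ∈ G.block 𝔠 T t :=
  Set.mem_insert _ _

theorem mem_block_iff_of_mem {s t : E} (hs : s ∈ T) : s ∈ G.block 𝔠 T t ↔ s = t :=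
  ⟨fun h => h.resolve_right fun h => h.1 hs, fun h => h ▸ mem_block_self s⟩

theorem edgesConnected_block (t : E) : G.EdgesConnected (G.block 𝔠 T t) :=
  edgesConnected_of_meet (mem_block_self t) fun g hg =>
    hg.elim (fun h => h ▸ meet_self g) fun h => h.2.1

theorem eq_of_not_meet_of_not_meet (hpart : IsEdgePartition 𝔠)
    (hmatch : ∀ M ∈ 𝔠, G.Matching M)
    (hconn : ∀ M ∈ 𝔠, ∀ N ∈ 𝔠, M ≠ N → G.EdgesConnected (M ∪ N))
    (htouch : ∀ g, u ∈ G.ends g ∨ v ∈ G.ends g) (hT : ∀ M ∈ 𝔠, ∃! e, e ∈ T ∧ e ∈ M)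
    {s t t' : E} (hs : s ∈ T) (ht : t ∈ T) (ht' : t' ∈ T) (hst : ¬ G.Meet s t)
    (hst' : ¬ G.Meet s t') : t = t' := by
  by_contra htt'
  obtain ⟨N, hN, hsN⟩ := hpart.exists_mem s
  obtain ⟨N₁, hN₁, htN₁⟩ := hpart.exists_mem t
  obtain ⟨N₂, hN₂, ht'N₂⟩ := hpart.exists_mem t'
  have hne : ∀ {a}, ¬ G.Meet s a → s ≠ a := fun h hsa => h (hsa ▸ meet_self s)
  exact hst' (meet_of_not_meet (hmatch N hN) (hmatch N₁ hN₁) (hmatch N₂ hN₂)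
    (hconn N hN N₁ hN₁ (ne_of_mem_transversal hT hN hs ht hsN htN₁ (hne hst)))
    (hconn N hN N₂ hN₂ (ne_of_mem_transversal hT hN hs ht' hsN ht'N₂ (hne hst')))
    (hconn N₁ hN₁ N₂ hN₂ (ne_of_mem_transversal hT hN₁ ht ht' htN₁ ht'N₂ htt'))
    htouch hsN htN₁ ht'N₂ hst)

theorem disjoint_block (hpart : IsEdgePartition 𝔠) (hmatch : ∀ M ∈ 𝔠, G.Matching M)
    (hconn : ∀ M ∈ 𝔠, ∀ N ∈ 𝔠, M ≠ N → G.EdgesConnected (M ∪ N))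
    (htouch : ∀ g, u ∈ G.ends g ∨ v ∈ G.ends g) (hT : ∀ M ∈ 𝔠, ∃! e, e ∈ T ∧ e ∈ M)
    {t t' : E} (ht : t ∈ T) (ht' : t' ∈ T) (htt' : t ≠ t') :
    Disjoint (G.block 𝔠 T t) (G.block 𝔠 T t') := by
  rw [Set.disjoint_left]
  rintro g (rfl | ⟨hgT, -, s, hs, hts, N, hN, hgN, hsN⟩) hg'
  · exact htt' ((mem_block_iff_of_mem ht).1 hg')
  rcases hg' with rfl | ⟨-, -, s', hs', hts', N', hN', hgN', hs'N'⟩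
  · exact hgT ht'
  obtain rfl := hpart.eq_of_mem hN hN' hgN hgN'
  obtain rfl := (hT N hN).unique ⟨hs, hsN⟩ ⟨hs', hs'N'⟩
  exact htt' (eq_of_not_meet_of_not_meet hpart hmatch hconn htouch hT hs ht ht'
    (fun h => hts h.symm) (fun h => hts' h.symm))

theorem edgesIncident_block (hpart : IsEdgePartition 𝔠) (hmatch : ∀ M ∈ 𝔠, G.Matching M)
    (hconn : ∀ M ∈ 𝔠, ∀ N ∈ 𝔠, M ≠ N → G.EdgesConnected (M ∪ N))
    (htouch : ∀ g, u ∈ G.ends g ∨ v ∈ G.ends g) (hT : ∀ M ∈ 𝔠, ∃! e, e ∈ T ∧ e ∈ M)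
    {t t' : E} (ht : t ∈ T) (ht' : t' ∈ T) (htt' : t ≠ t') :
    G.EdgesIncident (G.block 𝔠 T t) (G.block 𝔠 T t') := by
  by_cases hmeet : G.Meet t t'
  · exact ⟨t, mem_block_self t, t', mem_block_self t', hmeet⟩
  obtain ⟨N, hN, htN⟩ := hpart.exists_mem t
  obtain ⟨N', hN', ht'N'⟩ := hpart.exists_mem t'
  obtain ⟨p, hp, p', hp', hpt, hp't', htp', ht'p, hpp'⟩ :=
    exists_meet_of_not_meet (hmatch N hN) (hmatch N' hN')
      (hconn N hN N' hN' (ne_of_mem_transversal hT hN ht ht' htN ht'N' htt'))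
      htouch htN ht'N' hmeet
  have hpT : p ∉ T := fun h => hpt ((hT N hN).unique ⟨h, hp⟩ ⟨ht, htN⟩)
  have hp'T : p' ∉ T := fun h => hp't' ((hT N' hN').unique ⟨h, hp'⟩ ⟨ht', ht'N'⟩)
  exact ⟨p', Or.inr ⟨hp'T, htp', t', ht', hmeet, N', hN', hp', ht'N'⟩,
    p, Or.inr ⟨hpT, ht'p, t, ht, fun h => hmeet h.symm, N, hN, hp, htN⟩, hpp'.symm⟩

end Transversal

end Multigraph

open Multigraph

theorem parallel_edges_case_general {V E : Type*}
    (G : Multigraph V E) (𝔠 : Set (Set E)) (hpart : IsEdgePartition 𝔠)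
    (hmatch : ∀ M ∈ 𝔠, G.Matching M)
    (hconn : ∀ M ∈ 𝔠, ∀ N ∈ 𝔠, M ≠ N → G.EdgesConnected (M ∪ N))
    (e f : E) (hef : e ≠ f) (hpar : G.ends e = G.ends f)
    (T : Set E) (hT1 : ∀ M ∈ 𝔠, ∃! e, e ∈ T ∧ e ∈ M) :
    ∃ 𝔎 : Set (Set E),
      (∀ A ∈ 𝔎, G.EdgesConnected A) ∧
      (∀ A ∈ 𝔎, ∀ B ∈ 𝔎, A ≠ B → Disjoint A B) ∧
      (∀ A ∈ 𝔎, ∀ B ∈ 𝔎, A ≠ B → G.EdgesIncident A B) ∧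
      TraversedBy 𝔎 T := by
  obtain ⟨u, v, huv⟩ : ∃ u v, G.ends e = s(u, v) :=
    Sym2.inductionOn (G.ends e) fun u v => ⟨u, v, rfl⟩
  have htouch : ∀ g, u ∈ G.ends g ∨ v ∈ G.ends g := fun g => by
    obtain ⟨w, hwe, hwg⟩ := meet_of_ends_eq_of_ne hpart hmatch hconn hef hpar g
    rw [huv, Sym2.mem_iff] at hwe
    rcases hwe with rfl | rfl
    exacts [Or.inl hwg, Or.inr hwg]
  refine ⟨G.block 𝔠 T '' T, ?_, ?_, ?_,
    traversedBy_image (fun t _ s hs => mem_block_iff_of_mem hs) mem_block_self⟩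
  · rintro _ ⟨t, -, rfl⟩
    exact edgesConnected_block t
  · rintro _ ⟨t, ht, rfl⟩ _ ⟨t', ht', rfl⟩ hne
    exact disjoint_block hpart hmatch hconn htouch hT1 ht ht' (ne_of_apply_ne _ hne)
  · rintro _ ⟨t, ht, rfl⟩ _ ⟨t', ht', rfl⟩ hne
    exact edgesIncident_block hpart hmatch hconn htouch hT1 ht ht' (ne_of_apply_ne _ hne)

/-- If a graph `H` with a pair of parallel edges has its edge set partitioned into
matchings any two of which have connected union, then for every transversal `T`
of the partition there is a family of connected, pairwise disjoint, pairwise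
incident edge sets traversed by `T`. -/
theorem parallel_edges_case {V E : Type*} [Fintype V] [Fintype E]
    (G : Multigraph V E) (𝔠 : Set (Set E)) (hpart : IsEdgePartition 𝔠)
    (hmatch : ∀ M ∈ 𝔠, G.Matching M)
    (hconn : ∀ M ∈ 𝔠, ∀ N ∈ 𝔠, M ≠ N → G.EdgesConnected (M ∪ N))
    (e f : E) (hef : e ≠ f) (hpar : G.ends e = G.ends f)
    (T : Set E) (hT : T ⊆ ⋃₀ 𝔠) (hT1 : ∀ M ∈ 𝔠, ∃! e, e ∈ T ∧ e ∈ M) :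
    ∃ 𝔎 : Set (Set E),
      (∀ A ∈ 𝔎, G.EdgesConnected A) ∧
      (∀ A ∈ 𝔎, ∀ B ∈ 𝔎, A ≠ B → Disjoint A B) ∧
      (∀ A ∈ 𝔎, ∀ B ∈ 𝔎, A ≠ B → G.EdgesIncident A B) ∧
      TraversedBy 𝔎 T :=
  parallel_edges_case_general G 𝔠 hpart hmatch hconn e f hef hpar T hT1
end

section
/- Let H be a graph and 𝔠 a partition of E(H) into k matchings such that the union of any two matchings in 𝔠 is a connected edge set. Then every edge xy of H satisfies d_H(x) + d_H(y) ≥ k + 1. -/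
namespace Multigraph

variable {V E : Type*} (G : Multigraph V E)

/-- The degree of a vertex: the number of edges incident with it. -/
noncomputable def deg (v : V) : ℕ := {e : E | v ∈ G.ends e}.ncard

end Multigraph

theorem Set.ncard_le_ncard_of_pairwiseDisjoint {α : Type*} {𝔠 : Set (Set α)} {S : Set α}
    (hS : S.Finite) (hdisj : 𝔠.PairwiseDisjoint id) (hmeet : ∀ M ∈ 𝔠, (M ∩ S).Nonempty) :
    𝔠.ncard ≤ S.ncard := by
  rcases 𝔠.eq_empty_or_nonempty with rfl | ⟨M, hM⟩
  · simp
  have : Nonempty α := ⟨(hmeet M hM).some⟩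
  choose! φ hφ using hmeet
  refine Set.ncard_le_ncard_of_injOn φ (fun M hM => (hφ M hM).2) ?_ hS
  intro M hM N hN hMN
  by_contra hne
  exact Set.disjoint_left.mp (hdisj hM hN hne) (hφ M hM).1 (hMN ▸ (hφ N hN).1)

namespace Multigraph

variable {V E : Type*} (G : Multigraph V E)

theorem exists_incident_of_edgesConnected_union {M N : Set E} {e : E} (hM : G.Matching M)
    (hMN : Disjoint M N) (hN : N.Nonempty) (hconn : G.EdgesConnected (M ∪ N)) (he : e ∈ M) :
    ∃ f ∈ N, ∃ v ∈ G.ends e, v ∈ G.ends f := by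
  by_contra! hisol
  obtain ⟨g, hg⟩ := hN
  have hstuck : ∀ f, Relation.ReflTransGen
      (fun a b => a ∈ M ∪ N ∧ b ∈ M ∪ N ∧ ∃ v : V, v ∈ G.ends a ∧ v ∈ G.ends b) e f → f = e := by
    intro f hf
    induction hf with
    | refl => rfl
    | tail _ hstep ih =>
      obtain ⟨-, hc | hc, v, hv, hv'⟩ := hstep <;> subst ih
      · by_contra hne
        exact hM _ he _ hc (Ne.symm hne) ⟨v, hv, hv'⟩
      · exact absurd hv' (hisol _ hc v hv)
  have hge : g = e := hstuck g (hconn.2 e (Or.inl he) g (Or.inr hg))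
  exact Set.disjoint_left.mp hMN he (hge ▸ hg)

theorem ncard_incident_lt_deg_add_deg [Finite E] {e : E} {x y : V} (hxy : G.ends e = s(x, y)) :
    {f | x ∈ G.ends f ∨ y ∈ G.ends f}.ncard < G.deg x + G.deg y := by
  have hboth : 0 < {f | x ∈ G.ends f ∧ y ∈ G.ends f}.ncard :=
    (Set.ncard_pos (Set.toFinite _)).mpr ⟨e, by simp [hxy]⟩
  have hcount := Set.ncard_union_add_ncard_inter {f | x ∈ G.ends f} {f | y ∈ G.ends f}
  rw [deg, deg, ← hcount]
  exact Nat.lt_add_of_pos_right hboth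

end Multigraph

theorem degree_sum_of_edge_general {V E : Type*} [Fintype E]
    (G : Multigraph V E) (𝔠 : Set (Set E)) (k : ℕ) (hk : 𝔠.ncard = k)
    (hne : ∀ M ∈ 𝔠, M.Nonempty) (hcov : ⋃₀ 𝔠 = Set.univ)
    (hdisj : ∀ M ∈ 𝔠, ∀ N ∈ 𝔠, M ≠ N → Disjoint M N)
    (hmatch : ∀ M ∈ 𝔠, G.Matching M)
    (hconn : ∀ M ∈ 𝔠, ∀ N ∈ 𝔠, M ≠ N → G.EdgesConnected (M ∪ N)) :
    ∀ (e : E) (x y : V), G.ends e = s(x, y) → k + 1 ≤ G.deg x + G.deg y := by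
  intro e x y hxy
  obtain ⟨M₀, hM₀, heM₀⟩ : e ∈ ⋃₀ 𝔠 := hcov ▸ trivial
  have hmeet : ∀ N ∈ 𝔠, (N ∩ {f | x ∈ G.ends f ∨ y ∈ G.ends f}).Nonempty := by
    intro N hN
    rcases eq_or_ne M₀ N with rfl | hM₀N
    · exact ⟨e, heM₀, by simp [hxy]⟩
    obtain ⟨f, hfN, v, hve, hvf⟩ := G.exists_incident_of_edgesConnected_union (hmatch M₀ hM₀)
      (hdisj M₀ hM₀ N hN hM₀N) (hne N hN) (hconn M₀ hM₀ N hN hM₀N) heM₀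
    rw [hxy, Sym2.mem_iff] at hve
    rcases hve with rfl | rfl
    exacts [⟨f, hfN, Or.inl hvf⟩, ⟨f, hfN, Or.inr hvf⟩]
  have hclasses := Set.ncard_le_ncard_of_pairwiseDisjoint (Set.toFinite _) hdisj hmeet
  have hedges := G.ncard_incident_lt_deg_add_deg hxy
  omega

/-- If `E(H)` is partitioned into `k` matchings, the union of any two of them being
connected, then every edge `xy` satisfies `d(x) + d(y) ≥ k + 1`. -/
theorem degree_sum_of_edge {V E : Type*} [Fintype V] [Fintype E]
    (G : Multigraph V E) (𝔠 : Set (Set E)) (k : ℕ) (hk : 𝔠.ncard = k)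
    (hne : ∀ M ∈ 𝔠, M.Nonempty) (hcov : ⋃₀ 𝔠 = Set.univ)
    (hdisj : ∀ M ∈ 𝔠, ∀ N ∈ 𝔠, M ≠ N → Disjoint M N)
    (hmatch : ∀ M ∈ 𝔠, G.Matching M)
    (hconn : ∀ M ∈ 𝔠, ∀ N ∈ 𝔠, M ≠ N → G.EdgesConnected (M ∪ N)) :
    ∀ (e : E) (x y : V), G.ends e = s(x, y) → k + 1 ≤ G.deg x + G.deg y :=
  degree_sum_of_edge_general G 𝔠 k hk hne hcov hdisj hmatch hconn
end

section
/- In the simple complete graph K_5, if T is a set of six edges forming a subgraph isomorphic to K_{2,3}, then there is no family of six connected, pairwise disjoint, pairwise incident edge sets traversed by T. -/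
/-!
After relabelling the vertices, the `K_{2,3}` joins `{0, 1}` to `{2, 3, 4}`. Each member of the
family contains exactly one `K_{2,3}` edge, so it is that edge together with some of the four
remaining edges `01, 23, 24, 34`, and the family is determined by assigning each of those four
edges to one of the six members or to none. None of the `7⁴` assignments makes the members through
disjoint `K_{2,3}` edges meet while giving every member with more than one edge an edge adjacent to
its `K_{2,3}` edge, as connectivity demands; this is checked by evaluation.
-/

open Function

theorem Relation.ReflTransGen.exists_ne_rel {α : Type*} {r : α → α → Prop} {a b : α}
    (h : Relation.ReflTransGen r a b) (hab : a ≠ b) : ∃ c, c ≠ a ∧ r a c := by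
  induction h using Relation.ReflTransGen.head_induction_on with
  | refl => exact absurd rfl hab
  | @head a c hac _ ih =>
    by_cases hca : c = a
    · subst hca
      exact ih hab
    · exact ⟨c, hca, hac⟩

section Edges

variable {V W : Type*}

theorem EdgesConnected.exists_adjacent {F : Set (Sym2 V)} (hF : EdgesConnected F) {e f : Sym2 V}
    (he : e ∈ F) (hf : f ∈ F) (hfe : f ≠ e) : ∃ g ∈ F, g ≠ e ∧ ∃ v, v ∈ e ∧ v ∈ g := by
  obtain ⟨g, hge, -, hg, hv⟩ := (hF.2 e he f hf).exists_ne_rel hfe.symm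
  exact ⟨g, hg, hge, hv⟩

theorem exists_mem_map_and_mem_map (f : V → W) {e e' : Sym2 V} (h : ∃ v, v ∈ e ∧ v ∈ e') :
    ∃ w, w ∈ e.map f ∧ w ∈ e'.map f :=
  let ⟨v, hv, hv'⟩ := h
  ⟨f v, Sym2.mem_map.2 ⟨v, hv, rfl⟩, Sym2.mem_map.2 ⟨v, hv', rfl⟩⟩

theorem EdgesConnected.image (f : V → W) {F : Set (Sym2 V)} (hF : EdgesConnected F) :
    EdgesConnected (Sym2.map f '' F) := by
  refine ⟨hF.1.image _, ?_⟩
  rintro _ ⟨e, he, rfl⟩ _ ⟨e', he', rfl⟩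
  refine (hF.2 e he e' he').lift (Sym2.map f) fun a b ⟨ha, hb, hab⟩ => ?_
  exact ⟨Set.mem_image_of_mem _ ha, Set.mem_image_of_mem _ hb, exists_mem_map_and_mem_map f hab⟩

theorem EdgesIncident.image (f : V → W) {F F' : Set (Sym2 V)} (h : EdgesIncident F F') :
    EdgesIncident (Sym2.map f '' F) (Sym2.map f '' F') := by
  obtain ⟨e, he, e', he', hv⟩ := h
  exact ⟨_, Set.mem_image_of_mem _ he, _, Set.mem_image_of_mem _ he',
    exists_mem_map_and_mem_map f hv⟩

end Edges

theorem TraversedBy.image {α β : Type*} {g : α → β} (hg : Injective g) {𝔎 : Set (Set α)}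
    {T : Set α} (h : TraversedBy 𝔎 T) : TraversedBy (Set.image g '' 𝔎) (g '' T) := by
  refine ⟨?_, ?_⟩
  · rintro _ ⟨A, hA, rfl⟩
    obtain ⟨e, ⟨heT, heA⟩, huniq⟩ := h.1 A hA
    refine ⟨g e, ⟨Set.mem_image_of_mem g heT, Set.mem_image_of_mem g heA⟩, ?_⟩
    rintro _ ⟨⟨t, htT, rfl⟩, hta⟩
    rw [hg.mem_set_image] at hta
    rw [huniq t ⟨htT, hta⟩]
  · rintro _ ⟨e, heT, rfl⟩
    obtain ⟨A, hA, heA⟩ := h.2 e heT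
    exact ⟨g '' A, Set.mem_image_of_mem _ hA, Set.mem_image_of_mem g heA⟩

def IsLinkedFamily {V : Type*} (T : Set (Sym2 V)) (𝔎 : Set (Set (Sym2 V))) : Prop :=
  (∀ A ∈ 𝔎, A ⊆ (⊤ : SimpleGraph V).edgeSet) ∧
  (∀ A ∈ 𝔎, EdgesConnected A) ∧
  (∀ A ∈ 𝔎, ∀ B ∈ 𝔎, A ≠ B → Disjoint A B) ∧
  (∀ A ∈ 𝔎, ∀ B ∈ 𝔎, A ≠ B → EdgesIncident A B) ∧
  TraversedBy 𝔎 T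

namespace IsLinkedFamily

variable {V W : Type*} {T : Set (Sym2 V)} {𝔎 : Set (Set (Sym2 V))}

theorem map {f : V → W} (hf : Injective f) (h : IsLinkedFamily T 𝔎) :
    IsLinkedFamily (Sym2.map f '' T) (Set.image (Sym2.map f) '' 𝔎) := by
  obtain ⟨hsub, hconn, hdisj, hinc, htrav⟩ := h
  have hne {A B : Set (Sym2 V)} (h : Sym2.map f '' A ≠ Sym2.map f '' B) : A ≠ B :=
    fun hAB => h (hAB ▸ rfl)
  refine ⟨?_, ?_, ?_, ?_, htrav.image (Sym2.map.injective hf)⟩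
  · rintro _ ⟨A, hA, rfl⟩ _ ⟨e, he, rfl⟩
    simpa [Sym2.isDiag_map hf] using hsub A hA he
  · rintro _ ⟨A, hA, rfl⟩
    exact (hconn A hA).image f
  · rintro _ ⟨A, hA, rfl⟩ _ ⟨B, hB, rfl⟩ hAB
    exact (Set.disjoint_image_iff (Sym2.map.injective hf)).2 (hdisj A hA B hB (hne hAB))
  · rintro _ ⟨A, hA, rfl⟩ _ ⟨B, hB, rfl⟩ hAB
    exact (hinc A hA B hB (hne hAB)).image f

theorem eq_of_mem_of_mem (h : IsLinkedFamily T 𝔎) {A B : Set (Sym2 V)} (hA : A ∈ 𝔎) (hB : B ∈ 𝔎)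
    {e : Sym2 V} (heA : e ∈ A) (heB : e ∈ B) : A = B := by
  by_contra hAB
  exact Set.disjoint_left.1 (h.2.2.1 A hA B hB hAB) heA heB

theorem eq_of_mem_traversal (h : IsLinkedFamily T 𝔎) {A : Set (Sym2 V)} (hA : A ∈ 𝔎)
    {e e' : Sym2 V} (he : e ∈ T) (he' : e' ∈ T) (heA : e ∈ A) (he'A : e' ∈ A) : e = e' :=
  (h.2.2.2.2.1 A hA).unique ⟨he, heA⟩ ⟨he', he'A⟩

end IsLinkedFamily

def bipartiteEdges {V : Type*} (X Y : Finset V) : Set (Sym2 V) :=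
  {e | ∃ x ∈ X, ∃ y ∈ Y, e = s(x, y)}

theorem image_map_bipartiteEdges {V W : Type*} [DecidableEq W] (f : V → W) (X Y : Finset V) :
    Sym2.map f '' bipartiteEdges X Y = bipartiteEdges (X.image f) (Y.image f) := by
  ext e
  simp only [bipartiteEdges, Set.mem_image, Set.mem_ofPred_eq, Finset.mem_image]
  constructor
  · rintro ⟨_, ⟨x, hx, y, hy, rfl⟩, rfl⟩
    exact ⟨f x, ⟨x, hx, rfl⟩, f y, ⟨y, hy, rfl⟩, Sym2.map_mk f x y⟩
  · rintro ⟨_, ⟨x, hx, rfl⟩, _, ⟨y, hy, rfl⟩, rfl⟩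
    exact ⟨s(x, y), ⟨x, hx, y, hy, rfl⟩, Sym2.map_mk f x y⟩

theorem exists_injective_image_eq_standard {X Y : Finset (Fin 5)} (hX : X.card = 2)
    (hY : Y.card = 3) (hXY : Disjoint X Y) :
    ∃ f : Fin 5 → Fin 5, Injective f ∧ X.image f = {0, 1} ∧ Y.image f = {2, 3, 4} := by
  obtain ⟨x₀, x₁, h01, rfl⟩ := Finset.card_eq_two.1 hX
  obtain ⟨y₀, y₁, y₂, h01', h02', h12', rfl⟩ := Finset.card_eq_three.1 hY
  simp only [Finset.disjoint_insert_left, Finset.disjoint_singleton_left, Finset.mem_insert,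
    Finset.mem_singleton, not_or] at hXY
  have hg : Injective ![x₀, x₁, y₀, y₁, y₂] := by
    intro i j hij
    fin_cases i <;> fin_cases j <;> simp_all [eq_comm]
  let σ := Equiv.ofBijective _ hg.bijective_of_finite
  have h : σ.symm x₀ = 0 ∧ σ.symm x₁ = 1 ∧ σ.symm y₀ = 2 ∧ σ.symm y₁ = 3 ∧ σ.symm y₂ = 4 :=
    ⟨σ.symm_apply_apply 0, σ.symm_apply_apply 1, σ.symm_apply_apply 2, σ.symm_apply_apply 3,
      σ.symm_apply_apply 4⟩
  exact ⟨σ.symm, σ.symm.injective, by simp [h], by simp [h]⟩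

def k23Pairs : List (Fin 5 × Fin 5) := [(0, 2), (0, 3), (0, 4), (1, 2), (1, 3), (1, 4)]

def otherPairs : List (Fin 5 × Fin 5) := [(0, 1), (2, 3), (2, 4), (3, 4)]

theorem mem_bipartiteEdges_iff {e : Sym2 (Fin 5)} :
    e ∈ bipartiteEdges {0, 1} {2, 3, 4} ↔ ∃ t ∈ k23Pairs, e = s(t.1, t.2) := by
  revert e
  simp only [bipartiteEdges, Set.mem_ofPred_eq]
  decide

theorem exists_eq_mk_of_mem_edgeSet_top {e : Sym2 (Fin 5)}
    (he : e ∈ (⊤ : SimpleGraph (Fin 5)).edgeSet) :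
    (∃ t ∈ k23Pairs, e = s(t.1, t.2)) ∨ ∃ u ∈ otherPairs, e = s(u.1, u.2) := by
  revert e
  simp only [SimpleGraph.edgeSet_top, Set.mem_compl_iff, Sym2.mem_diagSet]
  decide

theorem mk_injOn_k23Pairs :
    ∀ t ∈ k23Pairs, ∀ t' ∈ k23Pairs, s(t.1, t.2) = s(t'.1, t'.2) → t = t' := by
  decide

theorem mk_k23Pairs_ne_mk_otherPairs :
    ∀ t ∈ k23Pairs, ∀ u ∈ otherPairs, s(t.1, t.2) ≠ s(u.1, u.2) := by
  decide

def meets {V : Type*} [DecidableEq V] (u w : V × V) : Bool :=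
  u.1 == w.1 || u.1 == w.2 || u.2 == w.1 || u.2 == w.2

theorem meets_iff {V : Type*} [DecidableEq V] (u w : V × V) :
    meets u w = true ↔ ∃ v, v ∈ s(u.1, u.2) ∧ v ∈ s(w.1, w.2) := by
  simp only [meets, Bool.or_eq_true, beq_iff_eq, Sym2.mem_iff]
  constructor
  · rintro (((h | h) | h) | h)
    exacts [⟨u.1, .inl rfl, .inl h⟩, ⟨u.1, .inl rfl, .inr h⟩, ⟨u.2, .inr rfl, .inl h⟩,
      ⟨u.2, .inr rfl, .inr h⟩]
  · rintro ⟨v, h₁ | h₁, h₂ | h₂⟩ <;> simp [← h₁, ← h₂]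

/-- `owners` pairs each edge of `otherPairs` with the `K_{2,3}` edge of its member, if any. -/
def ownedPairs (owners : List ((Fin 5 × Fin 5) × Option (Fin 5 × Fin 5))) (t : Fin 5 × Fin 5) :
    List (Fin 5 × Fin 5) :=
  (owners.filter (·.2 == some t)).map Prod.fst

theorem mem_ownedPairs_map {owner : Fin 5 × Fin 5 → Option (Fin 5 × Fin 5)}
    {t u : Fin 5 × Fin 5} :
    u ∈ ownedPairs (otherPairs.map fun w => (w, owner w)) t ↔
      u ∈ otherPairs ∧ owner u = some t := by
  simp [ownedPairs, List.filter_map]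

def crossPairs : List ((Fin 5 × Fin 5) × (Fin 5 × Fin 5)) :=
  (k23Pairs ×ˢ k23Pairs).filter fun p => !meets p.1 p.2

def feasible (owners : List ((Fin 5 × Fin 5) × Option (Fin 5 × Fin 5))) : Bool :=
  (crossPairs.all fun p => (p.1 :: ownedPairs owners p.1).any fun u =>
    (p.2 :: ownedPairs owners p.2).any (meets u)) &&
  k23Pairs.all fun t => (ownedPairs owners t).isEmpty || (ownedPairs owners t).any (meets t)

def ownerChoices : List (Option (Fin 5 × Fin 5)) := none :: k23Pairs.map some

theorem feasible_map_eq_false {owner : Fin 5 × Fin 5 → Option (Fin 5 × Fin 5)}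
    (h : ∀ u ∈ otherPairs, owner u ∈ ownerChoices) :
    feasible (otherPairs.map fun u => (u, owner u)) = false := by
  have hall : (ownerChoices.all fun o₀ => ownerChoices.all fun o₁ => ownerChoices.all fun o₂ =>
      ownerChoices.all fun o₃ =>
        !feasible [((0, 1), o₀), ((2, 3), o₁), ((2, 4), o₂), ((3, 4), o₃)]) = true := by
    decide
  simp only [List.all_eq_true, Bool.not_eq_true'] at hall
  simp only [otherPairs, List.mem_cons, List.not_mem_nil, or_false, forall_eq_or_imp,
    forall_eq] at h
  exact hall _ h.1 _ h.2.1 _ h.2.2.1 _ h.2.2.2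

open Classical in
noncomputable def owner (𝔎 : Set (Set (Sym2 (Fin 5)))) (u : Fin 5 × Fin 5) :
    Option (Fin 5 × Fin 5) :=
  k23Pairs.find? fun t => ∃ A ∈ 𝔎, s(t.1, t.2) ∈ A ∧ s(u.1, u.2) ∈ A

theorem owner_mem_ownerChoices (𝔎 : Set (Set (Sym2 (Fin 5)))) (u : Fin 5 × Fin 5) :
    owner 𝔎 u ∈ ownerChoices := by
  cases hu : owner 𝔎 u with
  | none => exact List.mem_cons_self
  | some t => exact List.mem_cons_of_mem _ (List.mem_map_of_mem (List.mem_of_find?_eq_some hu))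

namespace IsLinkedFamily

variable {𝔎 : Set (Set (Sym2 (Fin 5)))} {A : Set (Sym2 (Fin 5))} {t t' u : Fin 5 × Fin 5}

theorem eq_of_k23Pairs (h : IsLinkedFamily (bipartiteEdges {0, 1} {2, 3, 4}) 𝔎) (hA : A ∈ 𝔎)
    (ht : t ∈ k23Pairs) (ht' : t' ∈ k23Pairs) (htA : s(t.1, t.2) ∈ A)
    (ht'A : s(t'.1, t'.2) ∈ A) : t = t' :=
  mk_injOn_k23Pairs t ht t' ht' <|
    h.eq_of_mem_traversal hA (mem_bipartiteEdges_iff.2 ⟨t, ht, rfl⟩)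
      (mem_bipartiteEdges_iff.2 ⟨t', ht', rfl⟩) htA ht'A

theorem owner_eq_some_iff (h : IsLinkedFamily (bipartiteEdges {0, 1} {2, 3, 4}) 𝔎)
    (ht : t ∈ k23Pairs) :
    owner 𝔎 u = some t ↔ ∃ A ∈ 𝔎, s(t.1, t.2) ∈ A ∧ s(u.1, u.2) ∈ A := by
  constructor
  · intro hu
    simpa using List.find?_some hu
  · rintro ⟨A, hA, htA, huA⟩
    cases hu : owner 𝔎 u with
    | none =>
      exact absurd (List.find?_eq_none.1 hu t ht) (by simpa using ⟨A, hA, htA, huA⟩)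
    | some t' =>
      obtain ⟨A', hA', ht'A', huA'⟩ : ∃ A' ∈ 𝔎, s(t'.1, t'.2) ∈ A' ∧ s(u.1, u.2) ∈ A' := by
        simpa using List.find?_some hu
      obtain rfl := h.eq_of_mem_of_mem hA hA' huA huA'
      rw [h.eq_of_k23Pairs hA ht (List.mem_of_find?_eq_some hu) htA ht'A']

theorem mem_iff_exists_eq_mk (h : IsLinkedFamily (bipartiteEdges {0, 1} {2, 3, 4}) 𝔎) (hA : A ∈ 𝔎)
    (ht : t ∈ k23Pairs) (htA : s(t.1, t.2) ∈ A) {e : Sym2 (Fin 5)} :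
    e ∈ A ↔ ∃ w ∈ t :: ownedPairs (otherPairs.map fun u => (u, owner 𝔎 u)) t, e = s(w.1, w.2) := by
  simp only [List.mem_cons, mem_ownedPairs_map, exists_eq_or_imp]
  constructor
  · intro heA
    rcases exists_eq_mk_of_mem_edgeSet_top (h.1 A hA heA) with ⟨t', ht', rfl⟩ | ⟨u, hu, rfl⟩
    · exact .inl (by rw [h.eq_of_k23Pairs hA ht' ht heA htA])
    · exact .inr ⟨u, ⟨hu, (h.owner_eq_some_iff ht).2 ⟨A, hA, htA, heA⟩⟩, rfl⟩
  · rintro (rfl | ⟨u, ⟨-, hu⟩, rfl⟩)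
    · exact htA
    · obtain ⟨A', hA', htA', huA'⟩ := (h.owner_eq_some_iff ht).1 hu
      rwa [h.eq_of_mem_of_mem hA hA' htA htA']

theorem feasible_owner (h : IsLinkedFamily (bipartiteEdges {0, 1} {2, 3, 4}) 𝔎) :
    feasible (otherPairs.map fun u => (u, owner 𝔎 u)) = true := by
  have member (t) (ht : t ∈ k23Pairs) : ∃ A ∈ 𝔎, s(t.1, t.2) ∈ A :=
    h.2.2.2.2.2 _ (mem_bipartiteEdges_iff.2 ⟨t, ht, rfl⟩)
  simp only [feasible, Bool.and_eq_true, List.all_eq_true, Bool.or_eq_true, List.any_eq_true,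
    List.isEmpty_iff]
  refine ⟨fun ⟨t, t'⟩ hp => ?_, fun t ht => ?_⟩
  · rw [crossPairs, List.mem_filter, List.mem_product, Bool.not_eq_true'] at hp
    obtain ⟨⟨ht, ht'⟩, hmeets⟩ := hp
    obtain ⟨A, hA, htA⟩ := member _ ht
    obtain ⟨B, hB, ht'B⟩ := member _ ht'
    have hAB : A ≠ B := by
      rintro rfl
      rw [h.eq_of_k23Pairs hA ht ht' htA ht'B] at hmeets
      simp [meets] at hmeets
    obtain ⟨e, he, f, hf, hef⟩ := h.2.2.2.1 A hA B hB hAB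
    obtain ⟨u, hu, rfl⟩ := (h.mem_iff_exists_eq_mk hA ht htA).1 he
    obtain ⟨w, hw, rfl⟩ := (h.mem_iff_exists_eq_mk hB ht' ht'B).1 hf
    exact ⟨u, hu, w, hw, (meets_iff u w).2 hef⟩
  · refine or_iff_not_imp_left.2 fun hne => ?_
    obtain ⟨u, hu⟩ := List.exists_mem_of_ne_nil _ hne
    obtain ⟨A, hA, htA⟩ := member t ht
    have huA : s(u.1, u.2) ∈ A :=
      (h.mem_iff_exists_eq_mk hA ht htA).2 ⟨u, List.mem_cons_of_mem _ hu, rfl⟩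
    obtain ⟨g, hgA, hgt, htg⟩ := (h.2.1 A hA).exists_adjacent htA huA
      (mk_k23Pairs_ne_mk_otherPairs t ht u (mem_ownedPairs_map.1 hu).1).symm
    obtain ⟨w, hw, rfl⟩ := (h.mem_iff_exists_eq_mk hA ht htA).1 hgA
    rcases List.mem_cons.1 hw with rfl | hw
    · exact absurd rfl hgt
    · exact ⟨w, hw, (meets_iff t w).2 htg⟩

end IsLinkedFamily

theorem not_isLinkedFamily_standard (𝔎 : Set (Set (Sym2 (Fin 5)))) :
    ¬ IsLinkedFamily (bipartiteEdges {0, 1} {2, 3, 4}) 𝔎 := fun h => by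
  simpa [feasible_map_eq_false fun u _ => owner_mem_ownerChoices 𝔎 u] using h.feasible_owner

/-- In `K₅`, if `T` is a set of six edges forming a `K_{2,3}`, then there is no
family of six connected, pairwise disjoint, pairwise incident edge sets traversed
by `T`. -/
theorem no_traversal_for_K23_in_K5 (T : Set (Sym2 (Fin 5)))
    (hT : ∃ X Y : Finset (Fin 5), X.card = 2 ∧ Y.card = 3 ∧ Disjoint X Y ∧
      T = {e | ∃ x ∈ X, ∃ y ∈ Y, e = s(x, y)}) :
    ¬ ∃ 𝔎 : Set (Set (Sym2 (Fin 5))),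
      (∀ A ∈ 𝔎, A ⊆ (⊤ : SimpleGraph (Fin 5)).edgeSet) ∧
      (∀ A ∈ 𝔎, EdgesConnected A) ∧
      (∀ A ∈ 𝔎, ∀ B ∈ 𝔎, A ≠ B → Disjoint A B) ∧
      (∀ A ∈ 𝔎, ∀ B ∈ 𝔎, A ≠ B → EdgesIncident A B) ∧
      TraversedBy 𝔎 T := by
  rintro ⟨𝔎, h𝔎⟩
  obtain ⟨X, Y, hX, hY, hXY, rfl⟩ := hT
  obtain ⟨f, hf, hfX, hfY⟩ := exists_injective_image_eq_standard hX hY hXY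
  have h := IsLinkedFamily.map (T := bipartiteEdges X Y) hf h𝔎
  rw [image_map_bipartiteEdges, hfX, hfY] at h
  exact not_isLinkedFamily_standard _ h
end

section
/- Let k ≥ 3 be a real number and Δ ∈ [(k+1)/2, k−1]. If (Δ+1)·Δ·(k−Δ) ≤ k·(k−1), then Δ = k − 1 and equality holds. -/
/-! The difference `(Δ+1)·Δ·(k−Δ) − k·(k−1)` factors as `(k−1−Δ)·(Δ²−k)`. Since
`((k+1)/2)² − k = ((k−1)/2)² > 0`, the lower bound on `Δ` makes `Δ² − k` positive, so the
hypothesis forces `k − 1 ≤ Δ`, and with the upper bound `Δ = k − 1`. -/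

theorem cubic_sub_eq_mul (k Δ : ℝ) :
    (Δ + 1) * Δ * (k - Δ) - k * (k - 1) = (k - 1 - Δ) * (Δ ^ 2 - k) := by
  ring

theorem lt_sq_of_half_add_one_le {k Δ : ℝ} (hk : 1 < k) (hΔ : (k + 1) / 2 ≤ Δ) : k < Δ ^ 2 :=
  calc k < ((k + 1) / 2) ^ 2 := by nlinarith [sq_pos_of_pos (sub_pos.mpr hk)]
    _ ≤ Δ ^ 2 := pow_le_pow_left₀ (by linarith) hΔ 2

theorem eq_sub_one_of_cubic_le {k Δ : ℝ} (hsq : k < Δ ^ 2) (hΔ : Δ ≤ k - 1)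
    (hle : (Δ + 1) * Δ * (k - Δ) ≤ k * (k - 1)) : Δ = k - 1 := by
  have hprod : (k - 1 - Δ) * (Δ ^ 2 - k) ≤ 0 := by
    rw [← cubic_sub_eq_mul]
    linarith
  have := nonpos_of_mul_nonpos_left hprod (sub_pos.mpr hsq)
  linarith

/-- If `k ≥ 3` is real, `Δ ∈ [(k+1)/2, k-1]`, and `(Δ+1)·Δ·(k-Δ) ≤ k·(k-1)`,
then `Δ = k - 1` and equality holds. -/
theorem cubic_inequality_forces_equality (k Δ : ℝ) (hk : 3 ≤ k)
    (h1 : (k + 1) / 2 ≤ Δ) (h2 : Δ ≤ k - 1)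
    (h3 : (Δ + 1) * Δ * (k - Δ) ≤ k * (k - 1)) :
    Δ = k - 1 ∧ (Δ + 1) * Δ * (k - Δ) = k * (k - 1) := by
  have hΔ : Δ = k - 1 :=
    eq_sub_one_of_cubic_le (lt_sq_of_half_add_one_le (by linarith) h1) h2 h3
  subst hΔ
  exact ⟨rfl, by ring⟩
end
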